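/- arXiv:2504.19152 — 3 statements merged into one kernel-verified Lean document; each statement's English description precedes it below -/
import Mathlib

section
/- Let A be a strongly connected NFA with m states and period λ, let ε > 0, let u be a word of length n ≥ 6m²/ε, and assume L(A) contains at least one word of length n. If u is ε-far from L(A), then the positional word (0:u) contains at least εn/(12m²) pairwise disjoint occurrences of blocking factors of A, each of length at most 12m²/ε. -/
open scoped ENNReal

structure NFA' (Q : Type) (A : Type) where
  step : Q → A → Set Q
  init : Q
  final : Set Q

namespace NFA'

variable {Q A : Type}

inductive Run (M : NFA' Q A) : Q → List A → Q → Prop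
  | nil (q : Q) : Run M q [] q
  | cons {p q r : Q} {a : A} {w : List A} :
      q ∈ M.step p a → Run M q w r → Run M p (a :: w) r

def lang (M : NFA' Q A) : Set (List A) := {w | ∃ q ∈ M.final, M.Run M.init w q}

def Reachable (M : NFA' Q A) (s t : Q) : Prop := ∃ w, M.Run s w t

def StronglyConnected (M : NFA' Q A) : Prop := ∀ s t : Q, M.Reachable s t

def Trim (M : NFA' Q A) : Prop :=
  (∀ q, M.Reachable M.init q) ∧ (∀ q, ∃ f ∈ M.final, M.Reachable q f)

def IsPeriod (M : NFA' Q A) (l : ℕ) : Prop :=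
  0 < l ∧ (∀ (q : Q) (w : List A), w ≠ [] → M.Run q w q → l ∣ w.length) ∧
    ∀ d : ℕ, (∀ (q : Q) (w : List A), w ≠ [] → M.Run q w q → d ∣ w.length) → d ∣ l

end NFA'

def posWord {A : Type} (l : ℕ) (n : ℕ) (u : List A) : List (ZMod l × A) :=
  u.zipIdx.map fun ka => (((n + ka.2 : ℕ) : ZMod l), ka.1)

def IsPosWord {A : Type} (l : ℕ) (τ : List (ZMod l × A)) : Prop :=
  ∃ (n : ℕ) (u : List A), τ = posWord l n u

def NFA'.posLang {Q A : Type} (M : NFA' Q A) (l : ℕ) : Set (List (ZMod l × A)) :=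
  {τ | ∃ u ∈ M.lang, τ = posWord l 0 u}

def NFA'.Blocking {Q A : Type} (M : NFA' Q A) (l : ℕ) (τ : List (ZMod l × A)) : Prop :=
  IsPosWord l τ ∧ ∀ μ : List (ZMod l × A), IsPosWord l μ → τ <:+: μ → μ ∉ M.posLang l

def NFA'.MinBlocking {Q A : Type} (M : NFA' Q A) (l : ℕ) (τ : List (ZMod l × A)) : Prop :=
  M.Blocking l τ ∧ ∀ μ : List (ZMod l × A), μ <:+: τ → μ ≠ τ → ¬ M.Blocking l μ

open Classical in
noncomputable def hamming {A : Type} (u v : List A) : ℝ≥0∞ :=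
  if u.length = v.length then
    (((Finset.range u.length).filter fun k => u[k]? ≠ v[k]?).card : ℝ≥0∞)
  else ⊤

noncomputable def hammingSet {A : Type} (u : List A) (L : Set (List A)) : ℝ≥0∞ :=
  ⨅ v ∈ L, hamming u v

inductive Scattered {α : Type} : List (List α) → List α → Prop
  | nil (τ : List α) : Scattered [] τ
  | cons (pre f : List α) (fs : List (List α)) (rest : List α) :
      Scattered fs rest → Scattered (f :: fs) (pre ++ f ++ rest)

inductive NFA'.Path {Q A : Type} (M : NFA' Q A) : Q → List Q → Q → Prop
  | nil (q : Q) : NFA'.Path M q [] q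
  | cons {p q r : Q} {l : List Q} (a : A) :
      q ∈ M.step p a → NFA'.Path M q l r → NFA'.Path M p (q :: l) r

def NFA'.SimpleCycleLength {Q A : Type} (M : NFA' Q A) (n : ℕ) : Prop :=
  ∃ (q : Q) (l : List Q), l.length = n ∧ l ≠ [] ∧ l.Nodup ∧ M.Path q l q

def NFA'.IsCycleLcm {Q A : Type} (M : NFA' Q A) (p : ℕ) : Prop :=
  (∀ n, M.SimpleCycleLength n → n ∣ p) ∧
    ∀ d : ℕ, (∀ n, M.SimpleCycleLength n → n ∣ d) → p ∣ d

def NFA'.SameSCC {Q A : Type} (M : NFA' Q A) (s t : Q) : Prop :=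
  M.Reachable s t ∧ M.Reachable t s

structure Portal (Q : Type) (p : ℕ) where
  s : Q
  x : ZMod p
  t : Q
  y : ZMod p

def ValidPortal {Q A : Type} (M : NFA' Q A) {p : ℕ} (P : Portal Q p) : Prop :=
  M.SameSCC P.s P.t

def portalLang {Q A : Type} (M : NFA' Q A) {p : ℕ} (P : Portal Q p) :
    Set (List (ZMod p × A)) :=
  {τ | ∃ w : List A, M.Run P.s w P.t ∧ P.x + (w.length : ZMod p) = P.y ∧
    τ = posWord p P.x.val w}

def PortalBlocking {Q A : Type} (M : NFA' Q A) {p : ℕ} (P : Portal Q p)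
    (τ : List (ZMod p × A)) : Prop :=
  ∀ μ ∈ portalLang M P, ¬ τ <:+: μ

def IsSCCPath {Q A : Type} (M : NFA' Q A) {p : ℕ} :
    Portal Q p → List (A × Portal Q p) → Prop
  | P0, [] => ValidPortal M P0
  | P0, (a, P) :: rest =>
      ValidPortal M P0 ∧ P.x = P0.y + 1 ∧ P.s ∈ M.step P0.t a ∧
        ¬ M.Reachable P.s P0.t ∧ IsSCCPath M P rest

def sccPathLang {Q A : Type} (M : NFA' Q A) {p : ℕ} :
    Portal Q p → List (A × Portal Q p) → Set (List (ZMod p × A))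
  | P0, [] => portalLang M P0
  | P0, (a, P) :: rest =>
      {τ | ∃ τ₁ τ₂, τ₁ ∈ portalLang M P0 ∧ τ₂ ∈ sccPathLang M P rest ∧
        τ = τ₁ ++ (P0.y + 1, a) :: τ₂}

def portalsOf {Q A : Type} {p : ℕ} (P0 : Portal Q p) (steps : List (A × Portal Q p)) :
    List (Portal Q p) :=
  P0 :: steps.map Prod.snd

def lastPortal {Q A : Type} {p : ℕ} (P0 : Portal Q p) (steps : List (A × Portal Q p)) :
    Portal Q p :=
  (steps.map Prod.snd).getLastD P0

def IsAcceptingSCCPath {Q A : Type} (M : NFA' Q A) {p : ℕ} (P0 : Portal Q p)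
    (steps : List (A × Portal Q p)) : Prop :=
  IsSCCPath M P0 steps ∧ P0.s = M.init ∧ P0.x = 0 ∧
    (lastPortal P0 steps).t ∈ M.final ∧ (sccPathLang M P0 steps).Nonempty

def BlockingSeqFor {Q A : Type} (M : NFA' Q A) {p : ℕ} (σ : List (List (ZMod p × A)))
    (P0 : Portal Q p) (steps : List (A × Portal Q p)) : Prop :=
  ∃ idx : Fin (portalsOf P0 steps).length → Fin σ.length,
    Monotone idx ∧ ∀ j, PortalBlocking M ((portalsOf P0 steps).get j) (σ.get (idx j))

def StronglyBlockingSeqFor {Q A : Type} (M : NFA' Q A) {p : ℕ}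
    (σ : List (List (ZMod p × A))) (P0 : Portal Q p) (steps : List (A × Portal Q p)) : Prop :=
  ∃ idx : Fin (portalsOf P0 steps).length → Fin σ.length,
    StrictMono idx ∧ ∀ j, PortalBlocking M ((portalsOf P0 steps).get j) (σ.get (idx j))

def BlockingSeqForNFA {Q A : Type} (M : NFA' Q A) {p : ℕ}
    (σ : List (List (ZMod p × A))) : Prop :=
  ∀ (P0 : Portal Q p) (steps : List (A × Portal Q p)),
    IsAcceptingSCCPath M P0 steps → BlockingSeqFor M σ P0 steps

def SeqLE {α : Type} (σ σ' : List (List α)) : Prop :=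
  ∃ idx : Fin σ.length → Fin σ'.length,
    Monotone idx ∧ ∀ j, σ.get j <:+: σ'.get (idx j)

def MinBlockingSeq {Q A : Type} (M : NFA' Q A) {p : ℕ}
    (σ : List (List (ZMod p × A))) : Prop :=
  BlockingSeqForNFA M σ ∧
    ∀ σ' : List (List (ZMod p × A)), BlockingSeqForNFA M σ' → SeqLE σ' σ → SeqLE σ σ'

noncomputable def leftEffect {Q A : Type} (M : NFA' Q A) {p : ℕ}
    (σ : List (List (ZMod p × A))) (P0 : Portal Q p) (steps : List (A × Portal Q p)) : ℤ :=
  ((sSup {j : ℕ | ∃ i : ℕ, j = i + 1 ∧ i ≤ steps.length ∧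
    BlockingSeqFor M σ P0 (steps.take i)} : ℕ) : ℤ) - 1

namespace NFA'

variable {Q A : Type}

theorem Run.append {M : NFA' Q A} {p q r : Q} {w₁ w₂ : List A}
    (h1 : M.Run p w₁ q) (h2 : M.Run q w₂ r) : M.Run p (w₁ ++ w₂) r := by
  induction h1 with
  | nil => simpa
  | cons hstep _ ih => exact Run.cons hstep (ih h2)

theorem Run.split {M : NFA' Q A} {p r : Q} {w₁ w₂ : List A}
    (h : M.Run p (w₁ ++ w₂) r) : ∃ q, M.Run p w₁ q ∧ M.Run q w₂ r := by
  induction w₁ generalizing p with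
  | nil => exact ⟨p, Run.nil p, by simpa using h⟩
  | cons a t ih =>
    cases h with
    | cons hstep htail =>
      obtain ⟨q, h1, h2⟩ := ih htail
      exact ⟨q, Run.cons hstep h1, h2⟩

inductive RunS (M : NFA' Q A) : Q → List A → List Q → Q → Prop
  | nil (q : Q) : RunS M q [] [] q
  | cons {p q r : Q} {a : A} {w : List A} {s : List Q} :
      q ∈ M.step p a → RunS M q w s r → RunS M p (a :: w) (q :: s) r

theorem Run.exists_runS {M : NFA' Q A} {p r : Q} {w : List A} (h : M.Run p w r) :
    ∃ s, M.RunS p w s r := by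
  induction h with
  | nil q => exact ⟨[], RunS.nil q⟩
  | cons hstep _ ih => obtain ⟨s, hs⟩ := ih; exact ⟨_, RunS.cons hstep hs⟩

theorem RunS.run {M : NFA' Q A} {p r : Q} {w : List A} {s : List Q} (h : M.RunS p w s r) :
    M.Run p w r := by
  induction h with
  | nil q => exact Run.nil q
  | cons hstep _ ih => exact Run.cons hstep ih

theorem RunS.length_eq {M : NFA' Q A} {p r : Q} {w : List A} {s : List Q}
    (h : M.RunS p w s r) : s.length = w.length := by
  induction h <;> simp [*]

theorem getD_irrel {α : Type*} {L : List α} {i : ℕ} (h : i < L.length) (d d' : α) :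
    L.getD i d = L.getD i d' := by
  rw [List.getD_eq_getElem L d h, List.getD_eq_getElem L d' h]

theorem RunS.split {M : NFA' Q A} {p r : Q} {w : List A} {s : List Q}
    (h : M.RunS p w s r) :
    ∀ i ≤ w.length, M.RunS p (w.take i) (s.take i) ((p :: s).getD i p) ∧
      M.RunS ((p :: s).getD i p) (w.drop i) (s.drop i) r := by
  induction h with
  | nil q =>
    intro i hi
    simp only [List.length_nil, Nat.le_zero] at hi
    subst hi
    simpa using RunS.nil q
  | @cons p q r a w s hstep htail ih =>
    intro i hi
    match i with
    | 0 => exact ⟨RunS.nil p, RunS.cons hstep htail⟩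
    | Nat.succ j =>
      have hj : j ≤ w.length := by simpa using hi
      obtain ⟨h1, h2⟩ := ih j hj
      have hlen : j < (q :: s).length := by
        have := htail.length_eq; simp [this]; omega
      have hD : (q :: s).getD j q = (q :: s).getD j p := getD_irrel hlen q p
      have e1 : (p :: q :: s).getD (j+1) p = (q :: s).getD j p := List.getD_cons_succ ..
      rw [show (a :: w).take (j+1) = a :: w.take j from rfl,
        show (q :: s).take (j+1) = q :: s.take j from rfl,
        show (a :: w).drop (j+1) = w.drop j from rfl,
        show (q :: s).drop (j+1) = s.drop j from rfl, e1, ← hD]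
      exact ⟨RunS.cons hstep h1, h2⟩

theorem RunS.state_mid {M : NFA' Q A} {p r : Q} {w : List A} {s : List Q}
    (h : M.RunS p w s r) {i j : ℕ} (hij : i ≤ j) (hj : j ≤ w.length) :
    ((p :: s).getD i p :: s.drop i).getD (j - i) ((p :: s).getD i p) =
      (p :: s).getD j p := by
  have hs := h.length_eq
  rcases Nat.eq_or_lt_of_le hij with rfl | hlt
  · simp
  · have h1 : j - i - 1 < (s.drop i).length := by simp [hs]; omega
    have h2 : j - 1 < s.length := by omega
    have h3 : j - i = (j - i - 1) + 1 := by omega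
    rw [h3]
    simp only [List.getD_cons_succ]
    rw [List.getD_eq_getElem _ _ h1, List.getElem_drop]
    have h4 : (p :: s).getD j p = s.getD (j-1) p := by
      have : j = (j-1)+1 := by omega
      rw [this]; simp
    rw [h4, List.getD_eq_getElem _ _ h2]
    congr 1
    omega

theorem Run.cut {M : NFA' Q A} {p r : Q} {w : List A} {s : List Q}
    (h : M.RunS p w s r) {i j : ℕ} (hij : i < j) (hj : j ≤ w.length)
    (heq : (p :: s).getD i p = (p :: s).getD j p) :
    M.Run p (w.take i ++ w.drop j) r ∧
      M.Run ((p :: s).getD i p) ((w.drop i).take (j - i)) ((p :: s).getD i p) := by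
  obtain ⟨h1, h2⟩ := h.split i (le_of_lt (lt_of_lt_of_le hij hj))
  set x := (p :: s).getD i p with hx
  obtain ⟨h3, h4⟩ := h2.split (j - i) (by simp; omega)
  have hmid := h.state_mid (le_of_lt hij) hj
  rw [hmid, ← heq] at h3 h4
  constructor
  · have : w.drop j = (w.drop i).drop (j - i) := by
      rw [List.drop_drop]; congr 1; omega
    rw [this]
    exact h1.run.append h4.run
  · exact h3.run

set_option linter.unusedSectionVars false

section Graph

variable [Fintype Q] {M : NFA' Q A} {l : ℕ}

theorem Run.shorten_path {p r : Q} {w : List A} (h : M.Run p w r)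
    (hw : Fintype.card Q ≤ w.length) : ∃ w', M.Run p w' r ∧ w'.length < w.length := by
  obtain ⟨s, hs⟩ := h.exists_runS
  obtain ⟨i, j, hne, heq⟩ := Fintype.exists_ne_map_eq_of_card_lt
    (fun t : Fin (Fintype.card Q + 1) => (p :: s).getD t p) (by simp)
  have hne' : (i : ℕ) ≠ (j : ℕ) := fun hv => hne (Fin.ext hv)
  have hib : (i : ℕ) ≤ Fintype.card Q := by omega
  have hjb : (j : ℕ) ≤ Fintype.card Q := by omega
  rcases Nat.lt_or_ge (i : ℕ) (j : ℕ) with hij | hij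
  · obtain ⟨h1, _⟩ := Run.cut hs hij (by omega) heq
    refine ⟨_, h1, ?_⟩
    simp only [List.length_append, List.length_take, List.length_drop]
    omega
  · have hji : (j : ℕ) < (i : ℕ) := by omega
    obtain ⟨h1, _⟩ := Run.cut hs hji (by omega) heq.symm
    refine ⟨_, h1, ?_⟩
    simp only [List.length_append, List.length_take, List.length_drop]
    omega

theorem Run.shorten_all {p r : Q} (w : List A) (h : M.Run p w r) :
    ∃ w', M.Run p w' r ∧ w'.length + 1 ≤ Fintype.card Q := by
  by_cases hle : w.length + 1 ≤ Fintype.card Q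
  · exact ⟨w, h, hle⟩
  · obtain ⟨w', h', hlt⟩ := h.shorten_path (by omega)
    exact Run.shorten_all w' h'
termination_by w.length

theorem exists_short_run (hsc : M.StronglyConnected) (p r : Q) :
    ∃ w, M.Run p w r ∧ w.length + 1 ≤ Fintype.card Q := by
  obtain ⟨w, hw⟩ := hsc p r
  exact hw.shorten_all w

theorem cut_closed {y : Q} {w : List A} (h : M.Run y w y)
    (hw : Fintype.card Q + 1 ≤ w.length) :
    ∃ (x : Q) (z₁ z₂ : List A), M.Run x z₁ x ∧ M.Run y z₂ y ∧ 0 < z₁.length ∧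
      z₁.length < w.length ∧ z₂.length + z₁.length = w.length := by
  obtain ⟨s, hs⟩ := h.exists_runS
  obtain ⟨i, j, hne, heq⟩ := Fintype.exists_ne_map_eq_of_card_lt
    (fun t : Fin (Fintype.card Q + 1) => (y :: s).getD t y) (by simp)
  have hne' : (i : ℕ) ≠ (j : ℕ) := fun hv => hne (Fin.ext hv)
  have hib : (i : ℕ) ≤ Fintype.card Q := by omega
  have hjb : (j : ℕ) ≤ Fintype.card Q := by omega
  wlog hij : (i : ℕ) < (j : ℕ) generalizing i j
  · exact this j i (Ne.symm hne) heq.symm hne'.symm hjb hib (by omega)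
  obtain ⟨h1, h2⟩ := Run.cut hs hij (by omega) heq
  refine ⟨_, _, _, h2, h1, ?_, ?_, ?_⟩ <;>
    · simp only [List.length_append, List.length_take, List.length_drop]
      omega

theorem shrink_closed {q : Q} (w : List A) (h : M.Run q w q) (hpos : 0 < w.length) :
    ∃ w', M.Run q w' q ∧ 0 < w'.length ∧ w'.length ≤ Fintype.card Q := by
  by_cases hle : w.length ≤ Fintype.card Q
  · exact ⟨w, h, hpos, hle⟩
  · obtain ⟨x, z₁, z₂, _, hy, hpos1, hlt1, hsum⟩ := cut_closed h (by omega)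
    exact shrink_closed z₂ hy (by omega)
termination_by w.length
decreasing_by omega

theorem exists_closed (hl : M.IsPeriod l) : ∃ (q : Q) (w : List A), w ≠ [] ∧ M.Run q w q := by
  by_contra hcon
  push_neg at hcon
  have h0 : (0 : ℕ) ∣ l := hl.2.2 0 (fun q w hw hr => absurd hr (hcon q w hw))
  have := Nat.eq_zero_of_zero_dvd h0
  have := hl.1
  omega

theorem exists_small_cycle (hsc : M.StronglyConnected) (hl : M.IsPeriod l) (q : Q) :
    ∃ w, M.Run q w q ∧ 0 < w.length ∧ w.length ≤ Fintype.card Q := by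
  obtain ⟨y, w0, hw0ne, hw0⟩ := exists_closed hl
  obtain ⟨z₁, hz₁⟩ := hsc q y
  obtain ⟨z₂, hz₂⟩ := hsc y q
  have hrun : M.Run q (z₁ ++ w0 ++ z₂) q := (hz₁.append hw0).append hz₂
  apply shrink_closed _ hrun
  simp only [List.length_append]
  have : w0.length ≠ 0 := by simpa using hw0ne
  omega

def ClosedAt (M : NFA' Q A) (q : Q) (c : ℕ) : Prop := ∃ z, M.Run q z q ∧ z.length = c

theorem ClosedAt.add {q : Q} {c₁ c₂ : ℕ} (h1 : M.ClosedAt q c₁) (h2 : M.ClosedAt q c₂) :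
    M.ClosedAt q (c₁ + c₂) := by
  obtain ⟨z₁, hz₁, rfl⟩ := h1
  obtain ⟨z₂, hz₂, rfl⟩ := h2
  exact ⟨z₁ ++ z₂, hz₁.append hz₂, by simp⟩

theorem ClosedAt.zero (q : Q) : M.ClosedAt q 0 := ⟨[], Run.nil q, rfl⟩

theorem ClosedAt.mul {q : Q} {c : ℕ} (h : M.ClosedAt q c) (k : ℕ) : M.ClosedAt q (k * c) := by
  induction k with
  | zero => simpa using ClosedAt.zero q
  | succ k ih => have := ih.add h; rwa [show k * c + c = (k+1) * c by ring] at this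

theorem dvd_closed (hl : M.IsPeriod l) {q : Q} {w : List A} (h : M.Run q w q) :
    l ∣ w.length := by
  rcases eq_or_ne w [] with rfl | hne
  · simp
  · exact hl.2.1 q w hne h

theorem dvd_closedAt (hl : M.IsPeriod l) {q : Q} {c : ℕ} (h : M.ClosedAt q c) : l ∣ c := by
  obtain ⟨z, hz, rfl⟩ := h
  exact dvd_closed hl hz

theorem cong_runs (hsc : M.StronglyConnected) (hl : M.IsPeriod l) {p r : Q} {w₁ w₂ : List A}
    (h1 : M.Run p w₁ r) (h2 : M.Run p w₂ r) :
    ((w₁.length : ZMod l)) = (w₂.length : ZMod l) := by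
  obtain ⟨z, hz⟩ := hsc r p
  have d1 := dvd_closed hl (h1.append hz)
  have d2 := dvd_closed hl (h2.append hz)
  simp only [List.length_append] at d1 d2
  have e1 : ((w₁.length + z.length : ℕ) : ZMod l) = 0 :=
    (ZMod.natCast_eq_zero_iff _ _).mpr d1
  have e2 : ((w₂.length + z.length : ℕ) : ZMod l) = 0 :=
    (ZMod.natCast_eq_zero_iff _ _).mpr d2
  push_cast at e1 e2
  have := e1.trans e2.symm
  exact add_right_cancel this

theorem card_pos' (M : NFA' Q A) : 1 ≤ Fintype.card Q :=
  @Fintype.card_pos _ _ ⟨M.init⟩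

theorem dvd_period_of_dvd_small (hsc : M.StronglyConnected) (hl : M.IsPeriod l) (q : Q) (d : ℕ)
    (hd : ∀ c, M.ClosedAt q c → c ≤ 3 * Fintype.card Q - 2 → d ∣ c) : d ∣ l := by
  have m1 : 1 ≤ Fintype.card Q := card_pos' M
  apply hl.2.2
  intro y w hw hr
  suffices H : ∀ c (y : Q) (w : List A), w.length = c → M.Run y w y → d ∣ c from
    H w.length y w rfl hr
  clear hw hr y w
  intro c
  induction c using Nat.strong_induction_on with
  | _ c ih =>
    intro y w hlen hr
    by_cases hcm : c ≤ Fintype.card Q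
    · obtain ⟨z₁, hz₁, hz₁len⟩ := exists_short_run hsc q y
      obtain ⟨z₂, hz₂, hz₂len⟩ := exists_short_run hsc y q
      have hD : M.ClosedAt q (z₁.length + z₂.length) :=
        ⟨z₁ ++ z₂, hz₁.append hz₂, by simp⟩
      have hDc : M.ClosedAt q (z₁.length + c + z₂.length) :=
        ⟨z₁ ++ w ++ z₂, (hz₁.append hr).append hz₂, by simp [hlen]; omega⟩
      have d1 := hd _ hD (by omega)
      have d2 := hd _ hDc (by omega)
      have d3 := Nat.dvd_sub d2 d1
      have e : z₁.length + c + z₂.length - (z₁.length + z₂.length) = c := by omega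
      rwa [e] at d3
    · obtain ⟨x, z₁, z₂, hx, hy, hpos, hlt, hsum⟩ := cut_closed hr (by omega)
      have d1 := ih z₁.length (by omega) x z₁ rfl hx
      have d2 := ih z₂.length (by omega) y z₂ rfl hy
      have := Nat.dvd_add d2 d1
      rwa [hsum, hlen] at this

theorem step2 (q : Q) (g c B : ℕ) (hg : 0 < g)
    (H : ∀ N, g ∣ N → B ≤ N → M.ClosedAt q N) (hc : M.ClosedAt q c) (hc0 : 0 < c) :
    ∀ N, Nat.gcd g c ∣ N → B + (g / Nat.gcd g c) * c ≤ N → M.ClosedAt q N := by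
  intro N hdvd hle
  set g' := Nat.gcd g c with hg'def
  have hg'pos : 0 < g' := Nat.gcd_pos_of_pos_left c hg
  have hg'g : g' ∣ g := Nat.gcd_dvd_left g c
  have hg'c : g' ∣ c := Nat.gcd_dvd_right g c
  set g₁ := g / g' with hg₁def
  set c₁ := c / g' with hc₁def
  have hgg : g' * g₁ = g := Nat.mul_div_cancel' hg'g
  have hcc : g' * c₁ = c := Nat.mul_div_cancel' hg'c
  have hg₁pos : 0 < g₁ := by
    rcases Nat.eq_zero_or_pos g₁ with h0 | h; · rw [h0, mul_zero] at hgg; omega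
    exact h
  have hco : Nat.Coprime g₁ c₁ := Nat.coprime_div_gcd_div_gcd hg'pos
  haveI : NeZero g₁ := ⟨by omega⟩
  set N' := N / g' with hN'def
  have hNN : g' * N' = N := Nat.mul_div_cancel' hdvd
  set z : ZMod g₁ := (N' : ZMod g₁) * ((c₁ : ZMod g₁)⁻¹) with hzdef
  set t := z.val with htdef
  have htlt : t < g₁ := ZMod.val_lt z
  have hmod : t * c₁ ≡ N' [MOD g₁] := by
    have hinv : ((c₁ : ZMod g₁)) * (c₁ : ZMod g₁)⁻¹ = 1 :=
      ZMod.coe_mul_inv_eq_one c₁ (Nat.Coprime.symm hco)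
    have e : ((t * c₁ : ℕ) : ZMod g₁) = (N' : ZMod g₁) := by
      push_cast
      rw [htdef, ZMod.natCast_zmod_val, hzdef]
      rw [mul_comm ((N' : ZMod g₁) * (c₁ : ZMod g₁)⁻¹) (c₁ : ZMod g₁)]
      rw [← mul_assoc, mul_comm ((c₁ : ZMod g₁)) ((N' : ZMod g₁)), mul_assoc, hinv, mul_one]
    exact (ZMod.natCast_eq_natCast_iff _ _ _).mp e
  have hmod' : t * c ≡ N [MOD g] := by
    have := Nat.ModEq.mul_left' (c := g') hmod
    rwa [← mul_assoc, mul_comm g' t, mul_assoc, hcc, hNN, hgg] at this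
  have htc_le : t * c + c ≤ g₁ * c := by
    have : (t + 1) * c ≤ g₁ * c := Nat.mul_le_mul_right c (by omega)
    calc t * c + c = (t + 1) * c := by ring
    _ ≤ g₁ * c := this
  have htcN : t * c ≤ N := by omega
  have hgd : g ∣ N - t * c := (Nat.modEq_iff_dvd' htcN).mp hmod'
  have hBle : B ≤ N - t * c := by omega
  have h1 := H (N - t * c) hgd hBle
  have h2 : M.ClosedAt q (t * c) := hc.mul t
  have := h1.add h2
  rwa [Nat.sub_add_cancel htcN] at this

theorem chain_lemma (hsc : M.StronglyConnected) (hl : M.IsPeriod l) (q : Q) :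
    ∀ g, 0 < g → l ∣ g → ∀ B,
      (∀ N, g ∣ N → B ≤ N → M.ClosedAt q N) →
      ∀ N, l ∣ N →
        B + (3 * Fintype.card Q - 2) * (if g = l then 0 else g / l) ≤ N → M.ClosedAt q N := by
  have m1 : 1 ≤ Fintype.card Q := card_pos' M
  have hlpos : 0 < l := hl.1
  intro g
  induction g using Nat.strong_induction_on with
  | _ g ih =>
    intro hg0 hgl B HB N hlN hNle
    by_cases hgeq : g = l
    · subst hgeq
      simp only [if_pos rfl, mul_zero, add_zero] at hNle
      exact HB N hlN hNle
    · rw [if_neg hgeq] at hNle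
      have hlltg : l < g := lt_of_le_of_ne (Nat.le_of_dvd hg0 hgl) (Ne.symm hgeq)
      have hex : ∃ c, M.ClosedAt q c ∧ c ≤ 3 * Fintype.card Q - 2 ∧ ¬ g ∣ c := by
        by_contra hno
        push_neg at hno
        have hgdl : g ∣ l := dvd_period_of_dvd_small hsc hl q g hno
        have := Nat.le_of_dvd hlpos hgdl
        omega
      obtain ⟨c, hcC, hcle, hcnd⟩ := hex
      have hc0 : 0 < c := Nat.pos_of_ne_zero (fun h => hcnd (h ▸ dvd_zero g))
      set g'' := Nat.gcd g c with hg''def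
      have hg''g : g'' ∣ g := Nat.gcd_dvd_left g c
      have hg''lt : g'' < g :=
        lt_of_le_of_ne (Nat.le_of_dvd hg0 hg''g) (fun h => hcnd (h ▸ Nat.gcd_dvd_right g c))
      have hlg'' : l ∣ g'' := Nat.dvd_gcd hgl (dvd_closedAt hl hcC)
      have hg''0 : 0 < g'' := Nat.gcd_pos_of_pos_left c hg0
      have H2 := step2 q g c B hg0 HB hcC hc0
      apply ih g'' hg''lt hg''0 hlg'' (B + (g / g'') * c) H2 N hlN
      -- bound
      have key : (g / g'') * c + (3 * Fintype.card Q - 2) * (if g'' = l then 0 else g'' / l) ≤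
          (3 * Fintype.card Q - 2) * (g / l) := by
        set E := 3 * Fintype.card Q - 2 with hEdef
        have hcE : c ≤ E := hcle
        obtain ⟨x, hx⟩ := hg''g
        obtain ⟨y, hy⟩ := hlg''
        have hxpos : 0 < x := by
          rcases Nat.eq_zero_or_pos x with h0 | h; · rw [h0, mul_zero] at hx; omega
          exact h
        have hypos : 0 < y := by
          rcases Nat.eq_zero_or_pos y with h0 | h; · rw [h0, mul_zero] at hy; omega
          exact h
        have hgx : g / g'' = x := by rw [hx, Nat.mul_div_cancel_left x hg''0]
        have hgy : g'' / l = y := by rw [hy, Nat.mul_div_cancel_left y hlpos]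
        have hgl' : g / l = y * x := by
          rw [hx, hy, show l * y * x = l * (y * x) by ring, Nat.mul_div_cancel_left _ hlpos]
        by_cases hg''eq : g'' = l
        · rw [if_pos hg''eq, mul_zero, add_zero, hgx, hgl']
          have hy1 : y = 1 := by
            rw [hg''eq] at hy
            have : l * 1 = l * y := by omega
            exact (Nat.eq_of_mul_eq_mul_left hlpos this).symm
          rw [hy1, one_mul, mul_comm E x]
          exact Nat.mul_le_mul_left x hcE
        · rw [if_neg hg''eq, hgx, hgy, hgl']
          have hx2 : 2 ≤ x := by
            rcases Nat.lt_or_ge x 2 with h2 | h2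
            · interval_cases x <;> omega
            · exact h2
          have hy2 : 2 ≤ y := by
            have : l < g'' := lt_of_le_of_ne (Nat.le_of_dvd hg''0 ⟨y, hy⟩) (fun h => hg''eq h.symm)
            rcases Nat.lt_or_ge y 2 with h2 | h2
            · interval_cases y <;> omega
            · exact h2
          calc x * c + E * y ≤ x * E + E * y := by
                have := Nat.mul_le_mul_left x hcE; omega
            _ = E * (x + y) := by ring
            _ ≤ E * (y * x) := by
                have hxy : x + y ≤ x * y := Nat.add_le_mul hx2 hy2
                have : x * y = y * x := by ring
                exact Nat.mul_le_mul_left E (by omega)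
      omega


theorem closed_all (hsc : M.StronglyConnected) (hl : M.IsPeriod l) (q : Q) :
    ∀ N, l ∣ N → (3 * Fintype.card Q - 2) * Fintype.card Q ≤ N → M.ClosedAt q N := by
  obtain ⟨a0, ha0run, ha0pos, ha0le⟩ := exists_small_cycle hsc hl q
  set a := a0.length with hadef
  have haC : M.ClosedAt q a := ⟨a0, ha0run, rfl⟩
  have HB : ∀ N, a ∣ N → 0 ≤ N → M.ClosedAt q N := by
    rintro N ⟨k, rfl⟩ _
    rw [mul_comm]
    exact haC.mul k
  have hla : l ∣ a := dvd_closedAt hl haC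
  have hmain := chain_lemma hsc hl q a ha0pos hla 0 HB
  intro N hlN hNle
  apply hmain N hlN
  have h1 : (if a = l then 0 else a / l) ≤ Fintype.card Q := by
    split
    · omega
    · exact le_trans (Nat.div_le_self a l) ha0le
  have h2 := Nat.mul_le_mul_left (3 * Fintype.card Q - 2) h1
  omega

theorem conn_exact (hsc : M.StronglyConnected) (hl : M.IsPeriod l) (p r : Q) (t : ℕ)
    (ht : 3 * Fintype.card Q ^ 2 ≤ t + 1)
    (hres : ∃ z, M.Run p z r ∧ ((z.length : ZMod l) = (t : ZMod l))) :
    ∃ w, M.Run p w r ∧ w.length = t := by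
  have m1 : 1 ≤ Fintype.card Q := card_pos' M
  set m := Fintype.card Q with hmdef
  have hmm : m ^ 2 = m * m := sq m
  have hmlemm : m ≤ m * m := Nat.le_mul_of_pos_left m m1
  obtain ⟨z, hz, hzres⟩ := hres
  obtain ⟨wd, hwd, hwdlen⟩ := exists_short_run hsc p r
  have hcong : ((wd.length : ZMod l)) = (t : ZMod l) :=
    (cong_runs hsc hl hwd hz).trans hzres
  have hle : wd.length ≤ t := by omega
  have hdvd : l ∣ t - wd.length := by
    have hmodeq : wd.length ≡ t [MOD l] := (ZMod.natCast_eq_natCast_iff _ _ _).mp hcong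
    exact (Nat.modEq_iff_dvd' hle).mp hmodeq
  have hbig : (3 * m - 2) * m ≤ t - wd.length := by
    have hexp : (3 * m - 2) * m = 3 * (m * m) - 2 * m := by
      rw [Nat.sub_mul]; ring_nf
    omega
  obtain ⟨zc, hzc, hzclen⟩ := closed_all hsc hl r (t - wd.length) hdvd hbig
  exact ⟨wd ++ zc, hwd.append hzc, by simp [hzclen]; omega⟩

end Graph

end NFA'


namespace PW

variable {A : Type} {l : ℕ}

theorem length (l n : ℕ) (u : List A) : (posWord l n u).length = u.length := by
  simp [posWord]

theorem getElem? (l n : ℕ) (u : List A) (i : ℕ) :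
    (posWord l n u)[i]? = u[i]?.map fun a => (((n + i : ℕ) : ZMod l), a) := by
  simp [posWord, List.getElem?_map, List.getElem?_zipIdx]
  cases u[i]? <;> simp

theorem map_snd (l n : ℕ) (u : List A) : (posWord l n u).map Prod.snd = u := by
  apply List.ext_getElem?
  intro i
  simp [List.getElem?_map, PW.getElem?]

theorem take (l n k : ℕ) (u : List A) : (posWord l n u).take k = posWord l n (u.take k) := by
  apply List.ext_getElem?
  intro i
  rw [List.getElem?_take, PW.getElem?, PW.getElem?, List.getElem?_take]
  split <;> simp

theorem drop (l n k : ℕ) (u : List A) :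
    (posWord l n u).drop k = posWord l (n + k) (u.drop k) := by
  apply List.ext_getElem?
  intro i
  rw [List.getElem?_drop, PW.getElem?, PW.getElem?, List.getElem?_drop]
  have e : n + (k + i) = n + k + i := by omega
  rw [e]

theorem pos_inj (l n₁ n₂ : ℕ) (x : List A) (hne : x ≠ [])
    (h : posWord l n₁ x = posWord l n₂ x) : ((n₁ : ZMod l)) = (n₂ : ZMod l) := by
  have h0 : x[0]? ≠ none := by
    cases x with
    | nil => simp at hne
    | cons a t => simp
  have := congrArg (fun L => L[0]?) h
  simp only [PW.getElem?] at this
  cases hx : x[0]? with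
  | none => exact absurd hx h0
  | some a =>
    rw [hx] at this
    simp at this
    exact this

end PW

namespace NFA'

variable {Q A : Type}

theorem witness_of_not_blocking {M : NFA' Q A} {l : ℕ} {useg : List A} {s : ℕ}
    (hne : useg ≠ [])
    (hnb : ¬ M.Blocking l (posWord l s useg)) :
    ∃ (x : List A) (p q : Q), M.Run M.init x p ∧ M.Run p useg q ∧
      ((x.length : ZMod l) = (s : ZMod l)) := by
  unfold Blocking at hnb
  push_neg at hnb
  obtain ⟨μ, hμpos, hinf, hμlang⟩ := hnb ⟨s, useg, rfl⟩
  obtain ⟨v, hv, rfl⟩ := hμlang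
  obtain ⟨pre, post, heq⟩ := hinf
  obtain ⟨f, hf, hrun⟩ := hv
  have hlenv : pre.length + useg.length ≤ v.length := by
    have := congrArg List.length heq
    simp only [List.length_append, PW.length] at this
    omega
  set x := v.take pre.length with hxdef
  set mid := (v.drop pre.length).take useg.length with hmiddef
  have hxlen : x.length = pre.length := by
    rw [hxdef, List.length_take]
    omega
  have hfac : posWord l s useg = posWord l (0 + pre.length) mid := by
    have h1 : ((posWord l 0 v).drop pre.length).take useg.length =
        posWord l (0 + pre.length) mid := by
      rw [PW.drop, PW.take]
    have h2 : ((posWord l 0 v).drop pre.length).take useg.length = posWord l s useg := by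
      rw [← heq, List.append_assoc, List.drop_left, List.take_left']
      exact PW.length l s useg
    rw [← h2, h1]
  have hmid : mid = useg := by
    have := congrArg (List.map Prod.snd) hfac
    rw [PW.map_snd, PW.map_snd] at this
    exact this.symm
  have hpos : ((pre.length : ZMod l)) = (s : ZMod l) := by
    have := PW.pos_inj l s (0 + pre.length) useg hne (by rw [hfac, hmid])
    simpa using this.symm
  have hv2 : v = x ++ (mid ++ v.drop (pre.length + useg.length)) := by
    rw [hxdef, hmiddef, ← List.drop_drop]
    rw [List.take_append_drop, List.take_append_drop]
  rw [hv2] at hrun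
  obtain ⟨p, h1, h2⟩ := Run.split hrun
  obtain ⟨q, h2a, h2b⟩ := Run.split h2
  refine ⟨x, p, q, h1, hmid ▸ h2a, ?_⟩
  rw [hxlen]
  exact hpos
theorem not_blocking_nil {M : NFA' Q A} {l : ℕ} (hne : (M.posLang l).Nonempty) :
    ¬ M.Blocking l ([] : List (ZMod l × A)) := by
  rintro ⟨_, hall⟩
  obtain ⟨μ, hμ⟩ := hne
  obtain ⟨v, hv, rfl⟩ := hμ
  exact hall _ ⟨0, v, rfl⟩ ((posWord l 0 v).nil_infix) ⟨v, hv, rfl⟩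

end NFA'


namespace Scattered

theorem prepend {α : Type} {fs : List (List α)} {t z : List α}
    (h : Scattered fs t) : Scattered fs (z ++ t) := by
  cases h with
  | nil => exact Scattered.nil _
  | cons pre f fs rest h' =>
    rw [show z ++ (pre ++ f ++ rest) = (z ++ pre) ++ f ++ rest by simp]
    exact Scattered.cons _ f fs rest h'

theorem sublist {α : Type} {fs' fs : List (List α)} {t : List α}
    (hsub : List.Sublist fs' fs) (h : Scattered fs t) : Scattered fs' t := by
  induction h generalizing fs' with
  | nil t =>
    rw [List.sublist_nil.mp hsub]
    exact Scattered.nil t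
  | cons pre f fs rest h ih =>
    cases hsub with
    | cons _ hsub' =>
      have := (ih hsub').prepend (z := pre ++ f)
      exact this
    | cons_cons _ hsub' => exact Scattered.cons pre f _ rest (ih hsub')

theorem sum_length_le {α : Type} {fs : List (List α)} {t : List α} (h : Scattered fs t) :
    (fs.map List.length).sum ≤ t.length := by
  induction h with
  | nil => simp
  | cons pre f fs rest h ih => simp; omega

end Scattered

namespace NFA'

section Main

variable {Q A : Type} [Fintype Q] {M : NFA' Q A} {l : ℕ}

open Classical in
theorem main_lemma (hsc : M.StronglyConnected) (hl : M.IsPeriod l) (u : List A) (f₀ : Q)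
    (hf₀ : f₀ ∈ M.final) (v0 : List A) (hv0run : M.Run M.init v0 f₀)
    (hv0len : v0.length = u.length) :
    ∀ cnt s e (q : Q) (w : List A), u.length - s ≤ cnt →
      s ≤ u.length → e ≤ s → e + (3 * Fintype.card Q ^ 2 - 1) ≤ u.length →
      M.Run M.init w q → w.length = e →
      ∃ (fs : List (List (ZMod l × A))) (w' : List A) (q' : Q),
        (∀ f ∈ fs, M.Blocking l f) ∧ Scattered fs ((posWord l 0 u).drop s) ∧
        q' ∈ M.final ∧ M.Run M.init (w ++ w') q' ∧ (w ++ w').length = u.length ∧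
        ((Finset.Ico e u.length).filter fun i => u[i]? ≠ (w ++ w')[i]?).card + e ≤
          fs.length * (3 * Fintype.card Q ^ 2) + s +
            (2 * (3 * Fintype.card Q ^ 2 - 1) + 1) := by
  classical
  have hmm1 : 1 ≤ Fintype.card Q ^ 2 := Nat.one_le_pow _ _ (card_pos' M)
  set mm := Fintype.card Q ^ 2 with hmmdef
  set W := 3 * mm - 1 with hWdef
  set n := u.length with hndef
  -- generic helpers
  have htau : ∀ s k : ℕ, ((posWord l 0 u).drop s).take k =
      posWord l s ((u.drop s).take k) := by
    intro s k
    rw [PW.drop, PW.take, Nat.zero_add]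
  have hconn : ∀ (q r : Q) (w : List A) (tpos : ℕ), M.Run M.init w q →
      (∃ x, M.Run M.init x r ∧ ((x.length : ℕ) : ZMod l) = ((tpos : ℕ) : ZMod l)) →
      w.length + W ≤ tpos →
      ∃ cw, M.Run q cw r ∧ cw.length = tpos - w.length := by
    intro q r w tpos hw hctx hle
    obtain ⟨x, hx, hxc⟩ := hctx
    obtain ⟨z0, hz0⟩ := hsc q r
    have hcong : ((w.length + z0.length : ℕ) : ZMod l) = ((tpos : ℕ) : ZMod l) := by
      have h1 := cong_runs hsc hl (hw.append hz0) hx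
      simp only [List.length_append] at h1
      rw [h1, hxc]
    have hres : ((z0.length : ℕ) : ZMod l) = ((tpos - w.length : ℕ) : ZMod l) := by
      have h2 : ((w.length + (tpos - w.length) : ℕ) : ZMod l) = ((tpos : ℕ) : ZMod l) := by
        congr 1
        omega
      have h3 := hcong.trans h2.symm
      push_cast at h3 ⊢
      exact add_left_cancel h3
    exact conn_exact hsc hl q r (tpos - w.length) (by omega) ⟨z0, hz0, hres⟩
  have hwitness : ∀ s₂ e₂ δ₁ δ₂ : ℕ, s₂ < e₂ → e₂ ≤ n → δ₁ ≤ δ₂ → δ₂ ≤ e₂ - s₂ →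
      ¬ M.Blocking l (posWord l s₂ ((u.drop s₂).take (e₂ - s₂))) →
      ∃ (r rend : Q),
        (∃ x, M.Run M.init x r ∧ ((x.length : ℕ) : ZMod l) = ((s₂ + δ₁ : ℕ) : ZMod l)) ∧
        M.Run r ((u.drop (s₂ + δ₁)).take (δ₂ - δ₁)) rend := by
    intro s₂ e₂ δ₁ δ₂ h1 h2 h3 h4 hnb
    have hlen0 : ((u.drop s₂).take (e₂ - s₂)).length = e₂ - s₂ := by
      simp only [List.length_take, List.length_drop]
      omega
    have hne : (u.drop s₂).take (e₂ - s₂) ≠ [] := by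
      intro h0
      rw [h0] at hlen0
      simp at hlen0
      omega
    obtain ⟨x, p, qq, hx, hpq, hxc⟩ := witness_of_not_blocking hne hnb
    have hsplit1 : (u.drop s₂).take (e₂ - s₂) =
        ((u.drop s₂).take (e₂ - s₂)).take δ₂ ++ ((u.drop s₂).take (e₂ - s₂)).drop δ₂ :=
      (List.take_append_drop _ _).symm
    rw [hsplit1] at hpq
    obtain ⟨rmid2, hmid2, _⟩ := Run.split hpq
    -- hmid2 : Run p (take δ₂ of seg) rmid2
    have hsplit2 : ((u.drop s₂).take (e₂ - s₂)).take δ₂ =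
        (((u.drop s₂).take (e₂ - s₂)).take δ₂).take δ₁ ++
          (((u.drop s₂).take (e₂ - s₂)).take δ₂).drop δ₁ :=
      (List.take_append_drop _ _).symm
    rw [hsplit2] at hmid2
    obtain ⟨r, hr1, hr2⟩ := Run.split hmid2
    have hlen1 : ((((u.drop s₂).take (e₂ - s₂)).take δ₂).take δ₁).length = δ₁ := by
      simp only [List.length_take, List.length_drop]
      omega
    refine ⟨r, rmid2, ⟨x ++ _, hx.append hr1, ?_⟩, ?_⟩
    · have hgoal : ((x.length + δ₁ : ℕ) : ZMod l) = ((s₂ + δ₁ : ℕ) : ZMod l) := by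
        push_cast
        rw [hxc]
      simpa [List.length_append, hlen1] using hgoal
    · have hlists : (((u.drop s₂).take (e₂ - s₂)).take δ₂).drop δ₁ =
          (u.drop (s₂ + δ₁)).take (δ₂ - δ₁) := by
        rw [List.take_take, List.drop_take, List.drop_drop]
        congr 1
        omega
      rwa [hlists] at hr2
  have hcostgen : ∀ (v : List A) (a b : ℕ),
      ((Finset.Ico a b).filter fun i => u[i]? ≠ v[i]?).card ≤ b - a := by
    intro v a b
    calc ((Finset.Ico a b).filter fun i => u[i]? ≠ v[i]?).card ≤ (Finset.Ico a b).card :=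
          Finset.card_filter_le _ _
      _ = b - a := Nat.card_Ico a b
  have hcostsplit : ∀ (v : List A) (a b c : ℕ), a ≤ b → b ≤ c →
      ((Finset.Ico a c).filter fun i => u[i]? ≠ v[i]?).card ≤
        ((Finset.Ico a b).filter fun i => u[i]? ≠ v[i]?).card +
        ((Finset.Ico b c).filter fun i => u[i]? ≠ v[i]?).card := by
    intro v a b c hab hbc
    rw [← Finset.Ico_union_Ico_eq_Ico hab hbc, Finset.filter_union]
    exact Finset.card_union_le _ _
  have hcostzero : ∀ (v : List A) (a b : ℕ), (∀ i, a ≤ i → i < b → u[i]? = v[i]?) →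
      ((Finset.Ico a b).filter fun i => u[i]? ≠ v[i]?).card = 0 := by
    intro v a b hag
    rw [Finset.card_eq_zero, Finset.filter_eq_empty_iff]
    intro i hi
    rw [Finset.mem_Ico] at hi
    simp only [ne_eq, not_not]
    exact hag i hi.1 hi.2
  have hcopy : ∀ (w₁ rest : List A) (off L i : ℕ), w₁.length = off → off ≤ i →
      i < off + L → off + L ≤ n →
      (w₁ ++ ((u.drop off).take L ++ rest))[i]? = u[i]? := by
    intro w₁ rest off L i hw₁ hoffi hiL hLn
    rw [List.getElem?_append_right (by omega)]
    have hmidlen : ((u.drop off).take L).length = L := by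
      simp only [List.length_take, List.length_drop]
      omega
    rw [List.getElem?_append_left (by rw [hmidlen]; omega)]
    rw [List.getElem?_take, if_pos (by omega), List.getElem?_drop, hw₁]
    congr 1
    omega
  -- main induction
  intro cnt
  induction cnt using Nat.strong_induction_on with
  | _ cnt ih =>
    intro s e q w hcnt hsn hes heW hw hwlen
    by_cases hex : ∃ e', s < e' ∧ e' ≤ n ∧
        M.Blocking l (posWord l s ((u.drop s).take (e' - s)))
    · -- CASE S: there is a blocking extent
      set e' := sInf {e' | s < e' ∧ e' ≤ n ∧
        M.Blocking l (posWord l s ((u.drop s).take (e' - s)))} with he'def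
      have he'mem : s < e' ∧ e' ≤ n ∧
          M.Blocking l (posWord l s ((u.drop s).take (e' - s))) := Nat.sInf_mem hex
      obtain ⟨he's, he'n, he'blk⟩ := he'mem
      have hmin : ∀ j, j < e' → ¬ (s < j ∧ j ≤ n ∧
          M.Blocking l (posWord l s ((u.drop s).take (j - s)))) := by
        intro j hj
        exact Nat.notMem_of_lt_sInf hj
      set x := ((posWord l 0 u).drop s).take (e' - s) with hxdef
      have hxblk : M.Blocking l x := by rw [hxdef, htau]; exact he'blk
      have hscat : ∀ fs', Scattered fs' ((posWord l 0 u).drop e') →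
          Scattered (x :: fs') ((posWord l 0 u).drop s) := by
        intro fs' hfs'
        have hdec : (posWord l 0 u).drop s =
            [] ++ x ++ ((posWord l 0 u).drop e') := by
          rw [List.nil_append, hxdef]
          rw [show (posWord l 0 u).drop e' = (((posWord l 0 u)).drop s).drop (e' - s) by
            rw [List.drop_drop]; congr 1; omega]
          rw [List.take_append_drop]
        rw [hdec]
        exact Scattered.cons [] x fs' _ hfs'
      by_cases hS1 : s + W ≤ e' - 1 ∧ e' - 1 + W ≤ n
      · -- S1 : anchored segment
        have hnb : ¬ M.Blocking l (posWord l s ((u.drop s).take (e' - 1 - s))) := by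
          intro hb
          exact hmin (e' - 1) (by omega) ⟨by omega, by omega, hb⟩
        obtain ⟨r, rend, hctxr, hmidrun⟩ := hwitness s (e' - 1) W (e' - 1 - s)
          (by omega) (by omega) (by omega) (by omega) hnb
        obtain ⟨cw, hcw, hcwlen⟩ := hconn q r w (s + W) hw hctxr (by omega)
        set mid := (u.drop (s + W)).take (e' - 1 - s - W) with hmiddef
        have hmidlen : mid.length = e' - 1 - s - W := by
          simp only [hmiddef, List.length_take, List.length_drop]
          omega
        set w₂ := w ++ (cw ++ mid) with hw₂def
        have hw₂run : M.Run M.init w₂ rend := by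
          rw [hw₂def, ← List.append_assoc]
          exact ((hw.append hcw).append (by
            have : e' - 1 - s - W = (e' - 1 - s) - W := by omega
            rw [hmiddef, this]
            exact hmidrun))
        have hw₂len : w₂.length = e' - 1 := by
          simp only [hw₂def, List.length_append, hmidlen, hcwlen, hwlen]
          omega
        obtain ⟨fs', w'', q'', hblk', hscat', hfin', hrun', hlen', hcost'⟩ :=
          ih (n - e') (by omega) e' (e' - 1) rend w₂ (by omega) (by omega) (by omega)
            (by omega) hw₂run hw₂len
        refine ⟨x :: fs', cw ++ mid ++ w'', q'', ?_, hscat fs' hscat', hfin', ?_, ?_, ?_⟩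
        · intro f hf
          rcases List.mem_cons.mp hf with rfl | hf'
          · exact hxblk
          · exact hblk' f hf'
        · have : w ++ (cw ++ mid ++ w'') = w₂ ++ w'' := by
            rw [hw₂def]
            simp [List.append_assoc]
          rw [this]
          exact hrun'
        · have : w ++ (cw ++ mid ++ w'') = w₂ ++ w'' := by
            rw [hw₂def]; simp [List.append_assoc]
          rw [this, ← hlen']
        · -- cost accounting
          have hlisteq : w ++ (cw ++ mid ++ w'') = w₂ ++ w'' := by
            rw [hw₂def]; simp [List.append_assoc]
          rw [hlisteq]
          have hc1 := hcostsplit (w₂ ++ w'') e (e' - 1) n (by omega) (by omega)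
          have hc2 := hcostsplit (w₂ ++ w'') e (s + W) (e' - 1) (by omega) (by omega)
          have hc3 := hcostgen (w₂ ++ w'') e (s + W)
          have hc4 : ((Finset.Ico (s + W) (e' - 1)).filter
              fun i => u[i]? ≠ (w₂ ++ w'')[i]?).card = 0 := by
            apply hcostzero
            intro i hi1 hi2
            have : w₂ ++ w'' = (w ++ cw) ++ (mid ++ w'') := by
              rw [hw₂def]; simp [List.append_assoc]
            rw [this, hmiddef]
            exact (hcopy (w ++ cw) w'' (s + W) (e' - 1 - s - W) i
              (by simp [hwlen, hcwlen]; omega) hi1 (by omega) (by omega)).symm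
          have hc5 := hcost'
          simp only [List.length_cons]
          have hmul : (fs'.length + 1) * (3 * mm) = fs'.length * (3 * mm) + 3 * mm := by
            ring
          omega
      · by_cases hS2 : e' ≤ s + W
        · -- S2 : short segment, skip
          obtain ⟨fs', w'', q'', hblk', hscat', hfin', hrun', hlen', hcost'⟩ :=
            ih (n - e') (by omega) e' e q w (by omega) (by omega) (by omega) heW hw hwlen
          refine ⟨x :: fs', w'', q'', ?_, hscat fs' hscat', hfin', hrun', hlen', ?_⟩
          · intro f hf
            rcases List.mem_cons.mp hf with rfl | hf'
            · exact hxblk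
            · exact hblk' f hf'
          · simp only [List.length_cons]
            have hmul : (fs'.length + 1) * (3 * mm) = fs'.length * (3 * mm) + 3 * mm := by
              ring
            omega
        · -- S3 : blocking factor runs into the final window
          have hS3 : s + W ≤ e' - 1 ∧ n < e' - 1 + W := by
            constructor
            · omega
            · omega
          by_cases hS3a : s + 2 * W ≤ n
          · -- S3a: anchor, copy to n - W, then connect to f₀
            have hnb : ¬ M.Blocking l (posWord l s ((u.drop s).take (e' - 1 - s))) := by
              intro hb
              exact hmin (e' - 1) (by omega) ⟨by omega, by omega, hb⟩
            obtain ⟨r, rend, hctxr, hmidrun⟩ := hwitness s (e' - 1) W (n - W - s)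
              (by omega) (by omega) (by omega) (by omega) hnb
            obtain ⟨cw, hcw, hcwlen⟩ := hconn q r w (s + W) hw hctxr (by omega)
            set mid := (u.drop (s + W)).take (n - W - s - W) with hmiddef
            have hmidlen : mid.length = n - W - s - W := by
              simp only [hmiddef, List.length_take, List.length_drop]
              omega
            set w₂ := w ++ (cw ++ mid) with hw₂def
            have hw₂run : M.Run M.init w₂ rend := by
              rw [hw₂def, ← List.append_assoc]
              exact (hw.append hcw).append (by
                have : n - W - s - W = (n - W - s) - W := by omega
                rw [hmiddef, this]
                exact hmidrun)
            have hw₂len : w₂.length = n - W := by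
              simp only [hw₂def, List.length_append, hmidlen, hcwlen, hwlen]
              omega
            obtain ⟨cw2, hcw2, hcw2len⟩ := hconn rend f₀ w₂ n hw₂run
              ⟨v0, hv0run, by rw [hv0len]⟩ (by omega)
            refine ⟨[x], cw ++ mid ++ cw2, f₀, ?_, ?_, hf₀, ?_, ?_, ?_⟩
            · intro f hf
              rcases List.mem_cons.mp hf with rfl | hf'
              · exact hxblk
              · simp at hf'
            · exact hscat [] (Scattered.nil _)
            · have : w ++ (cw ++ mid ++ cw2) = w₂ ++ cw2 := by
                rw [hw₂def]; simp [List.append_assoc]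
              rw [this]
              exact hw₂run.append hcw2
            · have : w ++ (cw ++ mid ++ cw2) = w₂ ++ cw2 := by
                rw [hw₂def]; simp [List.append_assoc]
              rw [this]
              simp only [List.length_append, hw₂len, hcw2len]
              omega
            · have hlisteq : w ++ (cw ++ mid ++ cw2) = w₂ ++ cw2 := by
                rw [hw₂def]; simp [List.append_assoc]
              rw [hlisteq]
              have hc1 := hcostsplit (w₂ ++ cw2) e (s + W) n (by omega) (by omega)
              have hc2 := hcostsplit (w₂ ++ cw2) (s + W) (n - W) n (by omega) (by omega)
              have hc3 := hcostgen (w₂ ++ cw2) e (s + W)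
              have hc6 := hcostgen (w₂ ++ cw2) (n - W) n
              have hc4 : ((Finset.Ico (s + W) (n - W)).filter
                  fun i => u[i]? ≠ (w₂ ++ cw2)[i]?).card = 0 := by
                apply hcostzero
                intro i hi1 hi2
                have : w₂ ++ cw2 = (w ++ cw) ++ (mid ++ cw2) := by
                  rw [hw₂def]; simp [List.append_assoc]
                rw [this, hmiddef]
                exact (hcopy (w ++ cw) cw2 (s + W) (n - W - s - W) i
                  (by simp [hwlen, hcwlen]; omega) hi1 (by omega) (by omega)).symm
              simp only [List.length_cons, List.length_nil]
              omega
          · -- S3b: direct connection to f₀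
            obtain ⟨cw, hcw, hcwlen⟩ := hconn q f₀ w n hw ⟨v0, hv0run, by rw [hv0len]⟩
              (by omega)
            refine ⟨[x], cw, f₀, ?_, ?_, hf₀, hw.append hcw, ?_, ?_⟩
            · intro f hf
              rcases List.mem_cons.mp hf with rfl | hf'
              · exact hxblk
              · simp at hf'
            · exact hscat [] (Scattered.nil _)
            · simp only [List.length_append, hcwlen, hwlen]
              omega
            · have hc := hcostgen (w ++ cw) e n
              simp only [List.length_cons, List.length_nil]
              omega
    · -- CASE T: no blocking extent starting at s
      push_neg at hex
      by_cases hT2 : s + 2 * W + 1 ≤ n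
      · -- T2
        have hnb : ¬ M.Blocking l (posWord l s ((u.drop s).take (n - W - s))) := by
          intro hb
          exact (hex (n - W) (by omega) (by omega)) hb
        obtain ⟨r, rend, hctxr, hmidrun⟩ := hwitness s (n - W) W (n - W - s)
          (by omega) (by omega) (by omega) (by omega) hnb
        obtain ⟨cw, hcw, hcwlen⟩ := hconn q r w (s + W) hw hctxr (by omega)
        set mid := (u.drop (s + W)).take (n - W - s - W) with hmiddef
        have hmidlen : mid.length = n - W - s - W := by
          simp only [hmiddef, List.length_take, List.length_drop]
          omega
        set w₂ := w ++ (cw ++ mid) with hw₂def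
        have hw₂run : M.Run M.init w₂ rend := by
          rw [hw₂def, ← List.append_assoc]
          exact (hw.append hcw).append (by
            have : n - W - s - W = (n - W - s) - W := by omega
            rw [hmiddef, this]
            exact hmidrun)
        have hw₂len : w₂.length = n - W := by
          simp only [hw₂def, List.length_append, hmidlen, hcwlen, hwlen]
          omega
        obtain ⟨cw2, hcw2, hcw2len⟩ := hconn rend f₀ w₂ n hw₂run
          ⟨v0, hv0run, by rw [hv0len]⟩ (by omega)
        refine ⟨[], cw ++ mid ++ cw2, f₀, by simp, Scattered.nil _, hf₀, ?_, ?_, ?_⟩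
        · have : w ++ (cw ++ mid ++ cw2) = w₂ ++ cw2 := by
            rw [hw₂def]; simp [List.append_assoc]
          rw [this]
          exact hw₂run.append hcw2
        · have : w ++ (cw ++ mid ++ cw2) = w₂ ++ cw2 := by
            rw [hw₂def]; simp [List.append_assoc]
          rw [this]
          simp only [List.length_append, hw₂len, hcw2len]
          omega
        · have hlisteq : w ++ (cw ++ mid ++ cw2) = w₂ ++ cw2 := by
            rw [hw₂def]; simp [List.append_assoc]
          rw [hlisteq]
          have hc1 := hcostsplit (w₂ ++ cw2) e (s + W) n (by omega) (by omega)
          have hc2 := hcostsplit (w₂ ++ cw2) (s + W) (n - W) n (by omega) (by omega)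
          have hc3 := hcostgen (w₂ ++ cw2) e (s + W)
          have hc6 := hcostgen (w₂ ++ cw2) (n - W) n
          have hc4 : ((Finset.Ico (s + W) (n - W)).filter
              fun i => u[i]? ≠ (w₂ ++ cw2)[i]?).card = 0 := by
            apply hcostzero
            intro i hi1 hi2
            have : w₂ ++ cw2 = (w ++ cw) ++ (mid ++ cw2) := by
              rw [hw₂def]; simp [List.append_assoc]
            rw [this, hmiddef]
            exact (hcopy (w ++ cw) cw2 (s + W) (n - W - s - W) i
              (by simp [hwlen, hcwlen]; omega) hi1 (by omega) (by omega)).symm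
          simp only [List.length_nil]
          omega
      · -- T1
        obtain ⟨cw, hcw, hcwlen⟩ := hconn q f₀ w n hw ⟨v0, hv0run, by rw [hv0len]⟩
          (by omega)
        refine ⟨[], cw, f₀, by simp, Scattered.nil _, hf₀, hw.append hcw, ?_, ?_⟩
        · simp only [List.length_append, hcwlen, hwlen]
          omega
        · have hc := hcostgen (w ++ cw) e n
          simp only [List.length_nil]
          omega

end Main

end NFA'

theorem list_filter_split {α : Type} (p : List α → Bool) (fs : List (List α)) :
    ((fs.filter p).map List.length).sum + ((fs.filter (fun f => ! p f)).map List.length).sum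
        = (fs.map List.length).sum ∧
      (fs.filter p).length + (fs.filter (fun f => ! p f)).length = fs.length := by
  induction fs with
  | nil => simp
  | cons f t ih =>
    cases hpf : p f <;> simp [List.filter_cons, hpf] <;> omega

theorem list_sum_ge (c : ℕ) : ∀ L : List ℕ, (∀ x ∈ L, c ≤ x) → L.length * c ≤ L.sum := by
  intro L
  induction L with
  | nil => simp
  | cons a t ih =>
    intro h
    simp only [List.length_cons, List.sum_cons]
    have h1 := h a (by simp)
    have h2 := ih (fun x hx => h x (by simp [hx]))
    have h3 : (t.length + 1) * c = t.length * c + c := by ring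
    omega



-- STATEMENT 5
set_option maxHeartbeats 1000000 in
theorem stmt5 {Q A : Type} [Fintype Q] [Fintype A] (M : NFA' Q A)
    (hsc : M.StronglyConnected) (l : ℕ) (hl : M.IsPeriod l)
    (ε : ℝ) (hε : 0 < ε) (u : List A)
    (hn : 6 * (Fintype.card Q : ℝ) ^ 2 / ε ≤ (u.length : ℝ))
    (hword : ∃ v ∈ M.lang, v.length = u.length)
    (hfar : ENNReal.ofReal (ε * u.length) ≤ hammingSet u M.lang) :
    ∃ fs : List (List (ZMod l × A)),
      (∀ f ∈ fs, M.Blocking l f ∧ (f.length : ℝ) ≤ 12 * (Fintype.card Q : ℝ) ^ 2 / ε) ∧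
      Scattered fs (posWord l 0 u) ∧
      ε * (u.length : ℝ) / (12 * (Fintype.card Q : ℝ) ^ 2) ≤ (fs.length : ℝ) := by
  classical
  obtain ⟨v, hvlang, hvlen⟩ := hword
  have hm1 : 1 ≤ Fintype.card Q := NFA'.card_pos' M
  set n := u.length with hndef
  set m := Fintype.card Q with hmdef
  have hmm1 : 1 ≤ m ^ 2 := Nat.one_le_pow _ _ (by omega)
  have hR1 : (1 : ℝ) ≤ (m : ℝ) ^ 2 := by exact_mod_cast hmm1
  have hRpos : (0 : ℝ) < (m : ℝ) ^ 2 := by linarith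
  have hnpos : 0 < n := by
    by_contra h0
    have hn0 : (n : ℝ) = 0 := by
      have : n = 0 := by omega
      simp [this]
    have hpos : 0 < 6 * (m : ℝ) ^ 2 / ε := by positivity
    rw [hn0] at hn
    linarith
  have hnR : (0 : ℝ) < (n : ℝ) := by exact_mod_cast hnpos
  -- from hfar and hword : ε ≤ 1
  have hfar' : ∀ w0 : List A, w0 ∈ M.lang → w0.length = n →
      ε * n ≤ (((Finset.range n).filter fun k => u[k]? ≠ w0[k]?).card : ℝ) := by
    intro w0 hw0 hw0len
    have h1 : hammingSet u M.lang ≤ hamming u w0 := by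
      simp only [hammingSet]
      exact iInf₂_le w0 hw0
    have h2 : hamming u w0 =
        ((((Finset.range n).filter fun k => u[k]? ≠ w0[k]?).card : ℕ) : ℝ≥0∞) := by
      rw [hamming, if_pos (show u.length = w0.length by omega)]
    have h3 := hfar.trans (h1.trans (le_of_eq h2))
    rw [← ENNReal.ofReal_natCast] at h3
    exact (ENNReal.ofReal_le_ofReal_iff (by positivity)).mp h3
  have hε1 : ε ≤ 1 := by
    have h4 := hfar' v hvlang hvlen
    have h5 : (((Finset.range n).filter fun k => u[k]? ≠ v[k]?).card : ℝ) ≤ n := by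
      have := Finset.card_filter_le (Finset.range n) (fun k => u[k]? ≠ v[k]?)
      have h6 : (Finset.range n).card = n := Finset.card_range n
      exact_mod_cast le_trans this (le_of_eq h6)
    have : ε * n ≤ 1 * n := by linarith
    exact le_of_mul_le_mul_right (by linarith) hnR
  have hEN : 6 * (m : ℝ) ^ 2 ≤ ε * n := by
    have := (div_le_iff₀ hε).mp hn
    linarith
  have h6n : 6 * m ^ 2 ≤ n := by
    have h7 : ((6 * m ^ 2 : ℕ) : ℝ) ≤ (n : ℝ) := by
      push_cast
      nlinarith
    exact_mod_cast h7
  -- apply the main lemma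
  have hpow : Fintype.card Q ^ 2 = m ^ 2 := rfl
  obtain ⟨f₀, hf₀, hrunv⟩ := hvlang
  obtain ⟨fs, w', q', hblkall, hscat, hfin, hrun, hlen, hcost⟩ :=
    NFA'.main_lemma hsc hl u f₀ hf₀ v hrunv hvlen n 0 0 M.init []
      (by omega) (by omega) le_rfl (by omega) (NFA'.Run.nil _) rfl
  simp only [List.nil_append] at hrun hlen hcost
  rw [← hmdef, ← hndef] at hcost
  simp only [List.drop_zero] at hscat
  have hw'lang : w' ∈ M.lang := ⟨q', hfin, hrun⟩
  -- budget in ℝ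
  have hbud0 := hfar' w' hw'lang hlen
  rw [Finset.range_eq_Ico] at hbud0
  have hbudget : ε * n ≤ (fs.length : ℝ) * (3 * (m : ℝ) ^ 2) + (6 * (m : ℝ) ^ 2 - 1) := by
    have hc1 : ((Finset.Ico 0 n).filter fun i => u[i]? ≠ w'[i]?).card ≤
        fs.length * (3 * m ^ 2) + (6 * m ^ 2 - 1) := by omega
    have hc2 : ((fs.length * (3 * m ^ 2) + (6 * m ^ 2 - 1) : ℕ) : ℝ) =
        (fs.length : ℝ) * (3 * (m : ℝ) ^ 2) + (6 * (m : ℝ) ^ 2 - 1) := by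
      push_cast [Nat.cast_sub (by omega : 1 ≤ 6 * m ^ 2)]
      ring
    calc ε * n ≤ (((Finset.Ico 0 n).filter fun i => u[i]? ≠ w'[i]?).card : ℝ) := hbud0
      _ ≤ ((fs.length * (3 * m ^ 2) + (6 * m ^ 2 - 1) : ℕ) : ℝ) := by exact_mod_cast hc1
      _ = _ := hc2
  -- split into short and long factors
  -- split into short and long factors
  obtain ⟨Bnat, hBdef⟩ : ∃ x, x = ⌊12 * (m : ℝ) ^ 2 / ε⌋₊ := ⟨_, rfl⟩
  obtain ⟨fss, hfssdef⟩ : ∃ x, x = fs.filter (fun f => decide (f.length ≤ Bnat)) := ⟨_, rfl⟩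
  obtain ⟨fsl, hfsldef⟩ :
      ∃ x, x = fs.filter (fun f => ! decide (f.length ≤ Bnat)) := ⟨_, rfl⟩
  obtain ⟨hsum_split, hlen_split⟩ :=
    list_filter_split (fun f : List (ZMod l × A) => decide (f.length ≤ Bnat)) fs
  rw [← hfssdef, ← hfsldef] at hsum_split hlen_split
  have hsubss : List.Sublist fss fs := hfssdef ▸ List.filter_sublist
  have hsubsl : List.Sublist fsl fs := hfsldef ▸ List.filter_sublist
  have hsumtot : (fs.map List.length).sum ≤ n := by
    have := hscat.sum_length_le
    rwa [PW.length] at this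
  have hlong : ∀ x ∈ fsl.map List.length, Bnat + 1 ≤ x := by
    intro x hx
    obtain ⟨f, hf, rfl⟩ := List.mem_map.mp hx
    rw [hfsldef] at hf
    have := (List.mem_filter.mp hf).2
    simp only [Bool.not_eq_true', decide_eq_false_iff_not, not_le] at this
    omega
  have hlsum : fsl.length * (Bnat + 1) ≤ n := by
    have h8 := list_sum_ge (Bnat + 1) (fsl.map List.length) hlong
    simp only [List.length_map] at h8
    have h9 : (fsl.map List.length).sum ≤ (fs.map List.length).sum := by omega
    omega
  refine ⟨fss, ?_, Scattered.sublist hsubss hscat, ?_⟩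
  · intro f hf
    rw [hfssdef] at hf
    have hfmem := List.mem_filter.mp hf
    refine ⟨hblkall f hfmem.1, ?_⟩
    have h9 : f.length ≤ Bnat := by
      have := hfmem.2
      simpa using this
    calc (f.length : ℝ) ≤ (Bnat : ℝ) := by exact_mod_cast h9
      _ ≤ 12 * (m : ℝ) ^ 2 / ε := by
          rw [hBdef]
          exact Nat.floor_le (by positivity)
  · -- counting
    by_contra hcon
    push_neg at hcon
    set R := (m : ℝ) ^ 2 with hRdef
    have hKpos : (0 : ℝ) < 12 * R := by linarith
    set K := ε * (n : ℝ) / (12 * R) with hKdef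
    have hK12 : 12 * R * K = ε * n := by
      rw [hKdef]
      field_simp
    have hksK : (fss.length : ℝ) < K := hcon
    have hBlt : 12 * R / ε < (Bnat : ℝ) + 1 := by
      rw [hBdef]
      exact Nat.lt_floor_add_one _
    have hklK : (fsl.length : ℝ) ≤ K := by
      have h10 : (fsl.length : ℝ) * ((Bnat : ℝ) + 1) ≤ n := by exact_mod_cast hlsum
      have h11 : (fsl.length : ℝ) * (12 * R / ε) ≤ n := by
        have h11a : (fsl.length : ℝ) * (12 * R / ε) ≤ (fsl.length : ℝ) * ((Bnat : ℝ) + 1) :=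
          mul_le_mul_of_nonneg_left (le_of_lt hBlt) (by positivity)
        linarith
      have h12 : (fsl.length : ℝ) * (12 * R) ≤ ε * n := by
        have h13 := mul_le_mul_of_nonneg_left h11 (le_of_lt hε)
        have h14 : ε * ((fsl.length : ℝ) * (12 * R / ε)) = (fsl.length : ℝ) * (12 * R) := by
          field_simp
        nlinarith [h13, h14]
      rw [hKdef, le_div_iff₀ (by positivity)]
      linarith
    have hfs_eq : (fs.length : ℝ) = (fss.length : ℝ) + (fsl.length : ℝ) := by
      have h15 : fss.length + fsl.length = fs.length := hlen_split
      exact_mod_cast h15.symm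
    by_cases hK1 : K < 1
    · have hss0 : fss.length = 0 := by
        have h16 : (fss.length : ℝ) < 1 := lt_trans hksK hK1
        have h17 : fss.length < 1 := by exact_mod_cast h16
        omega
      have hsl0 : fsl.length = 0 := by
        have h16 : (fsl.length : ℝ) < 1 := lt_of_le_of_lt hklK hK1
        have h17 : fsl.length < 1 := by exact_mod_cast h16
        omega
      have hfs0 : (fs.length : ℝ) = 0 := by rw [hfs_eq, hss0, hsl0]; simp
      rw [hfs0] at hbudget
      simp only [zero_mul, zero_add] at hbudget
      have : 6 * (m:ℝ)^2 ≤ 6 * (m:ℝ)^2 - 1 := le_trans hEN hbudget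
      linarith
    · push_neg at hK1
      have h3R : (0 : ℝ) < 3 * R := by linarith
      have hklt : (fs.length : ℝ) < 2 * K := by
        rw [hfs_eq]
        linarith
      have h12 : (fs.length : ℝ) * (3 * R) < 2 * K * (3 * R) :=
        mul_lt_mul_of_pos_right hklt h3R
      have h13 : 6 * R ≤ 6 * R * K := by
        have h14 := mul_le_mul_of_nonneg_left hK1 (by linarith : (0:ℝ) ≤ 6 * R)
        simpa using h14
      linarith [h12, h13, hK12, hbudget]
end

section
/- Let A be a trim NFA, p the lcm of the lengths of its simple cycles, and π an SCC-path of A. If a p-positional word μ contains an occurrence of a strongly blocking sequence for π, then μ ∉ L(π). -/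
open scoped ENNReal

-- Auxiliary lemmas

lemma scattered_prepend {α : Type} {fs : List (List α)} {rest : List α}
    (h : Scattered fs rest) (pre : List α) : Scattered fs (pre ++ rest) := by
  cases h with
  | nil => exact .nil _
  | cons pre' f fs' rest' h' =>
      rw [show pre ++ (pre' ++ f ++ rest') = (pre ++ pre') ++ f ++ rest' by
        simp [List.append_assoc]]
      exact .cons _ _ _ _ h'

lemma scattered_sublist {α : Type} {σ' σ : List (List α)} {μ : List α}
    (hs : List.Sublist σ' σ) (h : Scattered σ μ) : Scattered σ' μ := by
  induction h generalizing σ' with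
  | nil τ => rw [List.sublist_nil.mp hs]; exact .nil _
  | cons pre f fs rest h ih =>
    cases hs with
    | cons _ hsub => exact scattered_prepend (ih hsub) (pre ++ f)
    | cons_cons _ hsub => exact .cons pre f _ rest (ih hsub)

lemma core_blocking {Q A : Type} (M : NFA' Q A) {p : ℕ}
    (steps : List (A × Portal Q p)) : ∀ (P0 : Portal Q p)
    (fs : List (List (ZMod p × A))) (μ : List (ZMod p × A)),
    List.Forall₂ (PortalBlocking M) (portalsOf P0 steps) fs →
    μ ∈ sccPathLang M P0 steps → ¬ Scattered fs μ := by
  induction steps with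
  | nil =>
    intro P0 fs μ hf hμ hsc
    simp only [portalsOf, List.map_nil] at hf
    cases hf with
    | cons hb htail =>
      rename_i f fs'
      cases htail
      cases hsc with
      | cons pre f2 fs2 rest h' =>
        exact hb _ hμ ⟨pre, rest, rfl⟩
  | cons hd tl ih =>
    obtain ⟨a, P⟩ := hd
    intro P0 fs μ hf hμ hsc
    simp only [portalsOf, List.map_cons] at hf
    cases hf with
    | cons hb htail =>
      rename_i f fs'
      cases hsc with
      | cons pre f2 fs2 rest hsc' =>
        obtain ⟨τ₁, τ₂, hτ₁, hτ₂, heq⟩ := hμ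
        by_cases hle : pre.length + f.length ≤ τ₁.length
        · have hp1 : pre ++ f <+: τ₁ ++ (P0.y + 1, a) :: τ₂ := ⟨rest, heq⟩
          have hp2 : τ₁ <+: τ₁ ++ (P0.y + 1, a) :: τ₂ := ⟨_, rfl⟩
          have hpf : pre ++ f <+: τ₁ :=
            List.prefix_of_prefix_length_le hp1 hp2 (by simpa using hle)
          obtain ⟨t, ht⟩ := hpf
          exact hb τ₁ hτ₁ ⟨pre, t, ht⟩
        · push_neg at hle
          have hk : τ₁.length + 1 ≤ pre.length + f.length := hle
          have h1 : List.drop (pre.length + f.length) (pre ++ f ++ rest) = rest := by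
            rw [show pre.length + f.length = (pre ++ f).length by simp]
            exact List.drop_left
          have h2 : List.drop (τ₁.length + 1) (τ₁ ++ (P0.y + 1, a) :: τ₂) = τ₂ := by
            rw [show τ₁ ++ (P0.y + 1, a) :: τ₂ = (τ₁ ++ [(P0.y + 1, a)]) ++ τ₂ by simp,
              show τ₁.length + 1 = (τ₁ ++ [(P0.y + 1, a)]).length by simp]
            exact List.drop_left
          have h3 : rest = List.drop (pre.length + f.length - (τ₁.length + 1)) τ₂ := by
            rw [← h2, List.drop_drop, Nat.add_sub_cancel' hk, ← heq, h1]
          have h4 : Scattered fs' τ₂ := by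
            obtain ⟨pre0, hp0⟩ := List.drop_suffix
              (pre.length + f.length - (τ₁.length + 1)) τ₂
            rw [← hp0]
            exact scattered_prepend (h3 ▸ hsc') pre0
          exact ih P fs' τ₂ htail hτ₂ h4

-- STATEMENT 12
theorem stmt12 {Q A : Type} [Fintype Q] [Fintype A] (M : NFA' Q A)
    (htrim : M.Trim) (p : ℕ) (hp : M.IsCycleLcm p)
    (P0 : Portal Q p) (steps : List (A × Portal Q p)) (hπ : IsSCCPath M P0 steps)
    (μ : List (ZMod p × A)) (σ : List (List (ZMod p × A)))
    (hσ : StronglyBlockingSeqFor M σ P0 steps) (hocc : Scattered σ μ) :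
    μ ∉ sccPathLang M P0 steps := by
  intro hμ
  obtain ⟨idx, hmono, hbl⟩ := hσ
  have hpw : (((List.finRange (portalsOf P0 steps).length).map idx)).Pairwise (· < ·) := by
    refine List.Pairwise.map idx (fun a b h => hmono h) ?_
    exact List.pairwise_lt_finRange _
  have hsub : List.Sublist (((List.finRange (portalsOf P0 steps).length).map idx).map σ.get) σ :=
    List.map_getElem_sublist hpw
  have hforall : List.Forall₂ (PortalBlocking M) (portalsOf P0 steps)
      (((List.finRange (portalsOf P0 steps).length).map idx).map σ.get) := by
    rw [List.forall₂_iff_get]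
    refine ⟨by simp, fun i h1 h2 => ?_⟩
    have hget : (((List.finRange (portalsOf P0 steps).length).map idx).map σ.get).get ⟨i, h2⟩
        = σ.get (idx ⟨i, h1⟩) := by
      simp [List.getElem_map, List.getElem_finRange]
    rw [hget]
    exact hbl ⟨i, h1⟩
  exact core_blocking M steps P0 _ μ hforall hμ (scattered_sublist hsub hocc)
end

section
/- Let A be a trim NFA, p the lcm of the lengths of its simple cycles, and π = P₀ →^{a₁} ⋯ →^{a_k} P_k an SCC-path of A. There exists a constant B (one may take B = 5(p·|Q|)²) such that for all ℓ ≥ B: if L(π) contains a word of length ℓ, then L(π) contains a word of length ℓ − p and a word of length ℓ + p. -/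
open scoped ENNReal

-- ===== auxiliary lemmas =====
namespace NFA'
variable {Q A : Type} {M : NFA' Q A}

lemma path_append {s q t : Q} {l₁ l₂ : List Q} (h₁ : M.Path s l₁ q) (h₂ : M.Path q l₂ t) :
    M.Path s (l₁ ++ l₂) t := by
  induction h₁ with
  | nil => simpa
  | cons a hstep _ ih => exact Path.cons a hstep (ih h₂)

def stSeq (s : Q) (l : List Q) (i : ℕ) : Q := (s :: l).getD i s

lemma getD_default_eq {α : Type} (l : List α) (i : ℕ) (hi : i < l.length) (d d' : α) :
    l.getD i d = l.getD i d' := by simp [List.getD_eq_getElem, hi]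

lemma stSeq_cons_succ (s q : Q) (l : List Q) (i : ℕ) (hi : i ≤ l.length) :
    stSeq s (q :: l) (i+1) = stSeq q l i := by
  simp only [stSeq, List.getD_cons_succ]
  exact getD_default_eq _ _ (by simp; omega) _ _

lemma stSeq_eq_getElem (s : Q) (l : List Q) (i : ℕ) (h : i < l.length) :
    stSeq s l (i+1) = l[i] := by
  simp [stSeq, List.getD_cons_succ, List.getD_eq_getElem, h]

lemma stSeq_drop (s : Q) (l : List Q) (i k : ℕ) (h : i + k ≤ l.length) :
    stSeq (stSeq s l i) (l.drop i) k = stSeq s l (i + k) := by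
  induction i generalizing s l with
  | zero => simp [stSeq]
  | succ i ih =>
    cases l with
    | nil => simp at h
    | cons q l' =>
      rw [stSeq_cons_succ s q l' i (by simp at h; omega), List.drop_succ_cons,
        ih q l' (by simp at h; omega)]
      have he : i + 1 + k = (i + k) + 1 := by omega
      rw [he, stSeq_cons_succ s q l' (i+k) (by simp at h; omega)]

lemma path_split {s t : Q} {l : List Q} (h : M.Path s l t) :
    ∀ i ≤ l.length, M.Path s (l.take i) (stSeq s l i) ∧
      M.Path (stSeq s l i) (l.drop i) t := by
  induction h with
  | nil q =>
      intro i hi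
      simp at hi; subst hi
      exact ⟨Path.nil _, Path.nil _⟩
  | @cons p' q' r' l' a hstep htail ih =>
      intro i hi
      cases i with
      | zero => exact ⟨Path.nil _, Path.cons a hstep htail⟩
      | succ i =>
          have hi' : i ≤ l'.length := by simp at hi; omega
          obtain ⟨h1, h2⟩ := ih i hi'
          rw [stSeq_cons_succ p' q' l' i hi']
          exact ⟨by simpa using Path.cons a hstep h1, h2⟩

lemma run_append {s q t : Q} {w₁ w₂ : List A} (h₁ : M.Run s w₁ q) (h₂ : M.Run q w₂ t) :
    M.Run s (w₁ ++ w₂) t := by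
  induction h₁ with
  | nil => simpa
  | cons hstep _ ih => exact Run.cons hstep (ih h₂)

lemma reach_trans {s q t : Q} (h₁ : M.Reachable s q) (h₂ : M.Reachable q t) :
    M.Reachable s t := by
  obtain ⟨w₁, h₁⟩ := h₁; obtain ⟨w₂, h₂⟩ := h₂
  exact ⟨w₁ ++ w₂, run_append h₁ h₂⟩

lemma run_of_path {s t : Q} {l : List Q} (h : M.Path s l t) :
    ∃ w : List A, M.Run s w t ∧ w.length = l.length := by
  induction h with
  | nil => exact ⟨[], Run.nil _, rfl⟩
  | cons a hstep _ ih =>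
      obtain ⟨w, hw, hl⟩ := ih
      exact ⟨a :: w, Run.cons hstep hw, by simp [hl]⟩

lemma path_of_run {s t : Q} {w : List A} (h : M.Run s w t) :
    ∃ l : List Q, M.Path s l t ∧ l.length = w.length := by
  induction h with
  | nil => exact ⟨[], Path.nil _, rfl⟩
  | cons hstep _ ih =>
      obtain ⟨l, hl, hlen⟩ := ih
      exact ⟨_ :: l, Path.cons _ hstep hl, by simp [hlen]⟩

lemma path_loop_join {q : Q} {l : List Q} (h : M.Path q l q) (m : ℕ) :
    M.Path q ((List.replicate m l).flatten) q := by
  induction m with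
  | zero => exact Path.nil _
  | succ m ih => rw [List.replicate_succ, List.flatten_cons]; exact path_append h ih

lemma path_up [Fintype Q] {p : ℕ} (hp : M.IsCycleLcm p) (hp0 : 0 < p) {s t : Q} {l : List Q}
    (h : M.Path s l t) (hn : Fintype.card Q ≤ l.length) :
    ∃ l' : List Q, M.Path s l' t ∧ l'.length = l.length + p := by
  classical
  set n := Fintype.card Q with hndef
  have hD : ∃ d, 0 < d ∧ ∃ i, i + d ≤ n ∧ stSeq s l i = stSeq s l (i + d) := by
    obtain ⟨i, hi, j, hj, hij, hgij⟩ :=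
      Finset.exists_ne_map_eq_of_card_lt_of_maps_to (s := Finset.range (n+1))
        (t := (Finset.univ : Finset Q)) (f := fun i => stSeq s l i) (by simp; exact le_rfl)
        (fun a _ => Finset.mem_univ _)
    simp only [Finset.mem_range] at hi hj
    rcases Nat.lt_or_ge i j with hlt | hge
    · exact ⟨j - i, by omega, i, by omega, by rw [Nat.add_sub_cancel' hlt.le]; exact hgij⟩
    · have hlt : j < i := by omega
      exact ⟨i - j, by omega, j, by omega, by rw [Nat.add_sub_cancel' hlt.le]; exact hgij.symm⟩
  set d₀ := Nat.find hD with hd₀def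
  obtain ⟨hd₀pos, i, hin, hgi⟩ := Nat.find_spec hD
  rw [← hd₀def] at hd₀pos hin hgi
  have hjl : i + d₀ ≤ l.length := hin.trans hn
  obtain ⟨h1, h2⟩ := path_split h i (by omega)
  obtain ⟨h3, h4⟩ := path_split h2 d₀ (by simp [List.length_drop]; omega)
  rw [stSeq_drop s l i d₀ hjl] at h3
  set seg := (l.drop i).take d₀ with hsegdef
  have hseglen : seg.length = d₀ := by simp [hsegdef]; omega
  have hsegget : ∀ k, (hk : k < seg.length) → seg[k] = stSeq s l (i + 1 + k) := by
    intro k hk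
    have hk' : k < d₀ := hseglen ▸ hk
    have hb : i + k < l.length := by omega
    have he : i + 1 + k = (i + k) + 1 := by omega
    rw [he, stSeq_eq_getElem s l (i+k) hb]
    simp [hsegdef, List.getElem_take, List.getElem_drop]
  have hnodup : seg.Nodup := by
    rw [List.nodup_iff_injective_get]
    rintro ⟨a, ha⟩ ⟨b, hb⟩ heq
    simp only [List.get_eq_getElem] at heq
    by_contra hne
    have hab : a ≠ b := by simpa using hne
    have key : ∀ a b : ℕ, (ha : a < seg.length) → (hb : b < seg.length) → a < b →
        seg[a] = seg[b] → False := by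
      intro a b ha hb hlt heq
      rw [hsegget a ha, hsegget b hb] at heq
      have hmem : 0 < b - a ∧ ∃ i', i' + (b - a) ≤ n ∧
          stSeq s l i' = stSeq s l (i' + (b - a)) := by
        refine ⟨by omega, i + 1 + a, by omega, ?_⟩
        have he2 : i + 1 + a + (b - a) = i + 1 + b := by omega
        rw [he2]; exact heq
      exact Nat.find_min hD (show b - a < d₀ by omega) hmem
    rcases Nat.lt_or_ge a b with hlt | hge
    · exact key a b ha hb hlt heq
    · exact key b a hb ha (by omega) heq.symm
  have hsegne : seg ≠ [] := by
    intro hc; rw [hc] at hseglen; simp at hseglen; omega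
  have hloop : M.Path (stSeq s l i) seg (stSeq s l i) := by
    rw [← hgi] at h3; exact h3
  have hcyc : M.SimpleCycleLength d₀ := ⟨stSeq s l i, seg, hseglen, hsegne, hnodup, hloop⟩
  obtain ⟨m, hm⟩ := hp.1 d₀ hcyc
  refine ⟨l.take i ++ ((List.replicate m seg).flatten ++ l.drop i),
    path_append h1 (path_append (path_loop_join hloop m) h2), ?_⟩
  have hjoin : ((List.replicate m seg).flatten).length = m * d₀ := by
    simp [hseglen, Nat.mul_comm]
  have hmm : m * d₀ = p := by rw [Nat.mul_comm]; omega
  simp only [List.length_append, List.length_take, List.length_drop, hjoin]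
  omega

lemma path_up_iter [Fintype Q] {p : ℕ} (hp : M.IsCycleLcm p) (hp0 : 0 < p) (e : ℕ)
    {s t : Q} {l : List Q} (h : M.Path s l t) (hn : Fintype.card Q ≤ l.length) :
    ∃ l' : List Q, M.Path s l' t ∧ l'.length = l.length + e * p := by
  induction e generalizing l with
  | zero => exact ⟨l, h, by simp⟩
  | succ e ih =>
      obtain ⟨l₁, h₁, hlen₁⟩ := path_up hp hp0 h hn
      obtain ⟨l', h', hlen'⟩ := ih h₁ (by omega)
      exact ⟨l', h', by rw [hlen', hlen₁]; ring⟩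

lemma path_down [Fintype Q] {p : ℕ} (hp : M.IsCycleLcm p) (hp0 : 0 < p) {s t : Q} {l : List Q}
    (h : M.Path s l t) (hn : p * Fintype.card Q + Fintype.card Q ≤ l.length) :
    ∃ l' : List Q, M.Path s l' t ∧ l'.length + p = l.length := by
  classical
  haveI : NeZero p := ⟨hp0.ne'⟩
  set n := Fintype.card Q with hndef
  -- pigeonhole on (state, position mod p)
  obtain ⟨i, hi, j, hj, hij, hgij⟩ :=
    Finset.exists_ne_map_eq_of_card_lt_of_maps_to (s := Finset.range (p*n+1))
      (t := (Finset.univ : Finset (Q × ZMod p)))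
      (f := fun i => (stSeq s l i, (i : ZMod p)))
      (by simp [ZMod.card, Nat.mul_comm]; exact le_rfl) (fun a _ => Finset.mem_univ _)
  simp only [Finset.mem_range, Prod.mk.injEq] at hi hj hgij
  -- wlog i < j
  have key : ∀ i j : ℕ, i < j → j ≤ p * n → stSeq s l i = stSeq s l j →
      ((i : ZMod p) = (j : ZMod p)) →
      ∃ l' : List Q, M.Path s l' t ∧ l'.length + p = l.length := by
    intro i j hlt hjn hst hmod
    have hdvd : p ∣ j - i := by
      have : i ≡ j [MOD p] := (ZMod.natCast_eq_natCast_iff _ _ _).mp hmod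
      exact (Nat.modEq_iff_dvd' hlt.le).mp this
    obtain ⟨e, he⟩ := hdvd
    have he1 : 1 ≤ e := by
      by_contra hc
      have h0 : e = 0 := by omega
      rw [h0, Nat.mul_zero] at he
      omega
    have hjlen : j ≤ l.length := by omega
    obtain ⟨h1, h2⟩ := path_split h i (by omega)
    obtain ⟨h3, h4⟩ := path_split h2 (j - i) (by simp [List.length_drop]; omega)
    rw [stSeq_drop s l i (j - i) (by omega)] at h4
    have hij' : i + (j - i) = j := by omega
    rw [hij'] at h4
    rw [← hst] at h4
    have hdd : (l.drop i).drop (j - i) = l.drop j := by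
      rw [List.drop_drop]; congr 1; try omega
    rw [hdd] at h4
    have hspl : M.Path s (l.take i ++ l.drop j) t := path_append h1 h4
    have hlen1 : (l.take i ++ l.drop j).length = l.length - p * e := by
      simp [List.length_append, List.length_take, List.length_drop]; omega
    have hpe : p * e ≤ p * n := by omega
    have hge : n ≤ (l.take i ++ l.drop j).length := by omega
    obtain ⟨l', h', hlen'⟩ := path_up_iter hp hp0 (e - 1) hspl hge
    refine ⟨l', h', ?_⟩
    rw [hlen', hlen1]
    have h5 : (e - 1) * p = e * p - p := by rw [Nat.sub_one_mul]
    have h6 : p ≤ e * p := Nat.le_mul_of_pos_left p he1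
    have h7 : p * e = e * p := Nat.mul_comm p e
    omega
  rcases Nat.lt_or_ge i j with hlt | hge
  · exact key i j hlt (by omega) hgij.1 hgij.2
  · exact key j i (by omega) (by omega) hgij.1.symm hgij.2.symm

lemma run_up [Fintype Q] {p : ℕ} (hp : M.IsCycleLcm p) (hp0 : 0 < p) {s t : Q} {w : List A}
    (h : M.Run s w t) (hn : Fintype.card Q ≤ w.length) :
    ∃ w' : List A, M.Run s w' t ∧ w'.length = w.length + p := by
  obtain ⟨l, hl, hlen⟩ := path_of_run h
  obtain ⟨l', hl', hlen'⟩ := path_up hp hp0 hl (by omega)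
  obtain ⟨w', hw', hwlen⟩ := run_of_path hl'
  exact ⟨w', hw', by omega⟩

lemma run_down [Fintype Q] {p : ℕ} (hp : M.IsCycleLcm p) (hp0 : 0 < p) {s t : Q} {w : List A}
    (h : M.Run s w t) (hn : p * Fintype.card Q + Fintype.card Q ≤ w.length) :
    ∃ w' : List A, M.Run s w' t ∧ w'.length + p = w.length := by
  obtain ⟨l, hl, hlen⟩ := path_of_run h
  obtain ⟨l', hl', hlen'⟩ := path_down hp hp0 hl (by omega)
  obtain ⟨w', hw', hwlen⟩ := run_of_path hl'
  exact ⟨w', hw', by omega⟩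

end NFA'

section PortalLemmas
variable {Q A : Type} {M : NFA' Q A}
open NFA'

lemma posWord_length {l n : ℕ} (u : List A) : (posWord l n u).length = u.length := by
  simp [posWord]

lemma portal_up [Fintype Q] {p : ℕ} (hp : M.IsCycleLcm p) (hp0 : 0 < p) (P : Portal Q p)
    {τ : List (ZMod p × A)} (hτ : τ ∈ portalLang M P) (hn : Fintype.card Q ≤ τ.length) :
    ∃ τ' ∈ portalLang M P, τ'.length = τ.length + p := by
  obtain ⟨w, hrun, hmod, rfl⟩ := hτ
  rw [posWord_length] at hn
  obtain ⟨w', hrun', hlen'⟩ := run_up hp hp0 hrun hn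
  refine ⟨posWord p P.x.val w', ⟨w', hrun', ?_, rfl⟩, ?_⟩
  · rw [hlen', Nat.cast_add, ZMod.natCast_self, add_zero]; exact hmod
  · rw [posWord_length, posWord_length, hlen']

lemma portal_down [Fintype Q] {p : ℕ} (hp : M.IsCycleLcm p) (hp0 : 0 < p) (P : Portal Q p)
    {τ : List (ZMod p × A)} (hτ : τ ∈ portalLang M P)
    (hn : p * Fintype.card Q + Fintype.card Q ≤ τ.length) :
    ∃ τ' ∈ portalLang M P, τ'.length + p = τ.length := by
  obtain ⟨w, hrun, hmod, rfl⟩ := hτ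
  rw [posWord_length] at hn
  obtain ⟨w', hrun', hlen'⟩ := run_down hp hp0 hrun hn
  refine ⟨posWord p P.x.val w', ⟨w', hrun', ?_, rfl⟩, ?_⟩
  · have : ((w'.length + p : ℕ) : ZMod p) = (w.length : ZMod p) := by rw [hlen']
    rw [Nat.cast_add, ZMod.natCast_self, add_zero] at this
    rw [this]; exact hmod
  · rw [posWord_length, posWord_length, hlen']

lemma scc_pump [Fintype Q] {p : ℕ} (hp : M.IsCycleLcm p) (hp0 : 0 < p) :
    ∀ (steps : List (A × Portal Q p)) (P0 : Portal Q p) (μ : List (ZMod p × A)),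
      μ ∈ sccPathLang M P0 steps →
      (steps.length + 1) * (p * Fintype.card Q + Fintype.card Q) + steps.length ≤ μ.length →
      (∃ μ' ∈ sccPathLang M P0 steps, μ'.length + p = μ.length) ∧
      (∃ μ'' ∈ sccPathLang M P0 steps, μ''.length = μ.length + p) := by
  intro steps
  induction steps with
  | nil =>
      intro P0 μ hμ hlen
      simp only [sccPathLang] at hμ ⊢
      simp only [List.length_nil, zero_add, one_mul, add_zero] at hlen
      refine ⟨portal_down hp hp0 P0 hμ hlen, portal_up hp hp0 P0 hμ ?_⟩
      have : Fintype.card Q ≤ p * Fintype.card Q + Fintype.card Q := by omega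
      omega
  | cons aP rest ih =>
      obtain ⟨a, P⟩ := aP
      intro P0 μ hμ hlen
      obtain ⟨τ₁, τ₂, h1, h2, rfl⟩ := hμ
      simp only [List.length_append, List.length_cons, List.length_cons] at hlen ⊢
      set T := p * Fintype.card Q + Fintype.card Q with hT
      by_cases hc : T ≤ τ₁.length
      · obtain ⟨τ₁', hm', hl'⟩ := portal_down hp hp0 P0 h1 hc
        obtain ⟨τ₁'', hm'', hl''⟩ := portal_up hp hp0 P0 h1 (by omega)
        constructor
        · refine ⟨τ₁' ++ (P0.y + 1, a) :: τ₂, ⟨τ₁', τ₂, hm', h2, rfl⟩, ?_⟩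
          simp only [List.length_append, List.length_cons]; omega
        · refine ⟨τ₁'' ++ (P0.y + 1, a) :: τ₂, ⟨τ₁'', τ₂, hm'', h2, rfl⟩, ?_⟩
          simp only [List.length_append, List.length_cons]; omega
      · have hlen2 : (rest.length + 1) * T + rest.length ≤ τ₂.length := by
          have hexp : (rest.length + 1 + 1) * T = (rest.length + 1) * T + T := by ring
          omega
        obtain ⟨⟨τ₂', hm', hl'⟩, ⟨τ₂'', hm'', hl''⟩⟩ := ih P τ₂ h2 hlen2
        constructor
        · refine ⟨τ₁ ++ (P0.y + 1, a) :: τ₂', ⟨τ₁, τ₂', h1, hm', rfl⟩, ?_⟩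
          simp only [List.length_append, List.length_cons]; omega
        · refine ⟨τ₁ ++ (P0.y + 1, a) :: τ₂'', ⟨τ₁, τ₂'', h1, hm'', rfl⟩, ?_⟩
          simp only [List.length_append, List.length_cons]; omega

lemma portals_cons {p : ℕ} (P0 P : Portal Q p) (a : A) (rest : List (A × Portal Q p)) :
    portalsOf P0 ((a, P) :: rest) = P0 :: portalsOf P rest := by
  simp [portalsOf]

lemma scc_reach {p : ℕ} :
    ∀ (steps : List (A × Portal Q p)) (P0 : Portal Q p), IsSCCPath M P0 steps →
      ∀ P' ∈ portalsOf P0 steps, M.Reachable P0.s P'.s := by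
  intro steps
  induction steps with
  | nil =>
      intro P0 _ P' hP'
      simp [portalsOf] at hP'
      subst hP'
      exact ⟨[], Run.nil _⟩
  | cons aP rest ih =>
      obtain ⟨a, P⟩ := aP
      intro P0 h P' hP'
      obtain ⟨hv, hx, hs, hnr, hrest⟩ := h
      rw [portals_cons] at hP'
      rcases List.mem_cons.mp hP' with rfl | h'
      · exact ⟨[], Run.nil _⟩
      · have r1 : M.Reachable P0.s P.s :=
          reach_trans hv.1 ⟨[a], Run.cons hs (Run.nil _)⟩
        exact reach_trans r1 (ih P hrest P' h')

lemma scc_nodup {p : ℕ} :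
    ∀ (steps : List (A × Portal Q p)) (P0 : Portal Q p), IsSCCPath M P0 steps →
      ((portalsOf P0 steps).map (fun P => P.s)).Nodup := by
  intro steps
  induction steps with
  | nil => intro P0 _; simp [portalsOf]
  | cons aP rest ih =>
      obtain ⟨a, P⟩ := aP
      intro P0 h
      obtain ⟨hv, hx, hs, hnr, hrest⟩ := h
      rw [portals_cons, List.map_cons, List.nodup_cons]
      refine ⟨?_, ih P hrest⟩
      intro hmem
      obtain ⟨P', hP', hPs⟩ := List.mem_map.mp hmem
      have h1 : M.Reachable P.s P'.s := scc_reach rest P hrest P' hP'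
      have h2 : M.Reachable P.s P0.t := reach_trans h1 (hPs ▸ hv.1)
      exact hnr h2

lemma scc_card [Fintype Q] {p : ℕ} (P0 : Portal Q p) (steps : List (A × Portal Q p))
    (h : IsSCCPath M P0 steps) : steps.length + 1 ≤ Fintype.card Q := by
  have := (scc_nodup steps P0 h).length_le_card
  simpa [portalsOf] using this

end PortalLemmas

-- STATEMENT 17
theorem stmt17 {Q A : Type} [Fintype Q] [Fintype A] (M : NFA' Q A)
    (htrim : M.Trim) (p : ℕ) (hp : M.IsCycleLcm p)
    (P0 : Portal Q p) (steps : List (A × Portal Q p)) (hπ : IsSCCPath M P0 steps) :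
    ∃ B : ℕ, B = 5 * (p * Fintype.card Q) ^ 2 ∧ ∀ ℓ : ℕ, B ≤ ℓ →
      (∃ μ ∈ sccPathLang M P0 steps, μ.length = ℓ) →
      (∃ μ' ∈ sccPathLang M P0 steps, μ'.length + p = ℓ) ∧
      (∃ μ'' ∈ sccPathLang M P0 steps, μ''.length = ℓ + p) := by
  classical
  refine ⟨5 * (p * Fintype.card Q) ^ 2, rfl, ?_⟩
  rintro ℓ hℓ ⟨μ, hμ, hμlen⟩
  set n := Fintype.card Q with hndef
  have hn0 : 0 < n := Fintype.card_pos_iff.mpr ⟨P0.s⟩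
  have hp0 : 0 < p := by
    have hd : p ∣ Nat.factorial n := by
      refine hp.2 _ (fun m hm => ?_)
      obtain ⟨q, l, hlen, hne, hnd, _⟩ := hm
      have hmpos : 0 < m := hlen ▸ List.length_pos_iff.mpr hne
      have hmle : m ≤ n := hlen ▸ hnd.length_le_card
      exact Nat.dvd_factorial hmpos hmle
    exact Nat.pos_of_dvd_of_pos hd (Nat.factorial_pos _)
  have hk : steps.length + 1 ≤ n := scc_card P0 steps hπ
  have harith : (steps.length + 1) * (p * n + n) + steps.length ≤ μ.length := by
    rw [hμlen]
    have h1 : (steps.length + 1) * (p * n + n) + steps.length ≤ n * (p * n + n) + n := by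
      have := Nat.mul_le_mul_right (p * n + n) hk
      omega
    have hx : n ≤ p * n := Nat.le_mul_of_pos_left n hp0
    have h2 : n * (p * n + n) + n ≤ (p * n) * ((p * n) + (p * n)) + (p * n) :=
      Nat.add_le_add (Nat.mul_le_mul hx (Nat.add_le_add le_rfl hx)) hx
    have h3 : (p * n) * ((p * n) + (p * n)) + (p * n) ≤ 5 * (p * n) ^ 2 := by
      nlinarith [Nat.le_self_pow two_ne_zero (p * n)]
    omega
  obtain ⟨⟨μ', h1, h2⟩, ⟨μ'', h3, h4⟩⟩ := scc_pump hp hp0 steps P0 μ hμ harith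
  exact ⟨⟨μ', h1, by omega⟩, ⟨μ'', h3, by omega⟩⟩
end
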